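/- arXiv:1803.02919 — 9 statements merged into one kernel-verified Lean document; each statement's English description precedes it below -/
import Mathlib

section
/- Let H be a real Hilbert space, let I be a nonempty finite index set and, for every i ∈ I, let G_i be a real Hilbert space, let V_i be a closed linear subspace of G_i, let r_i ∈ G_i, let L_i : H → G_i be a nonzero bounded linear operator, and let α_i > 0. Define h : H → ℝ by h(x) = (1/2) Σ_{i∈I} α_i d_{V_i}(L_i x − r_i)². Then h is convex and Fréchet differentiable, for every x ∈ H its gradient is ∇h(x) = Σ_{i∈I} α_i L_i*( proj_{V_i^⊥}(L_i x − r_i) ), and ∇h is Lipschitz continuous with constant β = Σ_{i∈I} α_i ‖L_i‖². -/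
/-!
Since `V` is a closed subspace, `d_V y = ‖P y‖` with `P` the orthogonal projection onto `Vᗮ`, so
each summand of `h` is `½ ‖P (L x - r)‖²`, half the squared norm of an affine map and hence convex.
As `P` is self-adjoint and idempotent, `⟪P u, P v⟫ = ⟪P u, v⟫`, so the gradient of `½ ‖P (· - r)‖²`
at `u` is `P (u - r)`, and precomposing with `L` turns it into `L* (P (L x - r))`. This map is the
composite of `L`, a translation, `P` and `L*`, with Lipschitz constants `‖L‖, 1, 1, ‖L‖`.
-/

open scoped RealInnerProductSpace NNReal
open Set

theorem ConvexOn.fun_sum {𝕜 E β ι : Type*} [Semiring 𝕜] [PartialOrder 𝕜] [AddCommMonoid E]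
    [AddCommMonoid β] [PartialOrder β] [IsOrderedAddMonoid β] [SMul 𝕜 E] [Module 𝕜 β]
    {t : Set E} (ht : Convex 𝕜 t) {s : Finset ι} {f : ι → E → β}
    (hf : ∀ i ∈ s, ConvexOn 𝕜 t (f i)) : ConvexOn 𝕜 t fun x => ∑ i ∈ s, f i x := by
  simpa only [← Finset.sum_apply] using
    Finset.sum_induction f (ConvexOn 𝕜 t) (fun _ _ => ConvexOn.add) (convexOn_const (0 : β) ht) hf

theorem convexOn_univ_half_sq_norm_comp_affineMap {E F : Type*} [AddCommGroup E] [Module ℝ E]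
    [NormedAddCommGroup F] [NormedSpace ℝ F] (A : E →ᵃ[ℝ] F) :
    ConvexOn ℝ univ fun x => ‖A x‖ ^ 2 / 2 := by
  have h := ((convexOn_univ_norm.pow (fun _ _ => norm_nonneg _) 2).comp_affineMap A).smul
    (c := (2 : ℝ)⁻¹) (by norm_num)
  simpa [div_eq_inv_mul] using h

theorem LipschitzWith.finset_sum {ι α G : Type*} [PseudoEMetricSpace α] [SeminormedAddCommGroup G]
    {s : Finset ι} {f : ι → α → G} {K : ι → ℝ≥0} (hf : ∀ i ∈ s, LipschitzWith (K i) (f i)) :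
    LipschitzWith (∑ i ∈ s, K i) fun x => ∑ i ∈ s, f i x := by
  induction s using Finset.cons_induction with
  | empty => simpa using LipschitzWith.const (0 : G)
  | cons i s hi ih =>
    simp only [Finset.sum_cons]
    exact (hf i (s.mem_cons_self i)).add (ih fun j hj => hf j (Finset.mem_cons_of_mem hj))

namespace Submodule

variable {F : Type*} [NormedAddCommGroup F] [InnerProductSpace ℝ F]
  (K : Submodule ℝ F) [K.HasOrthogonalProjection]

theorem infDist_eq_norm_starProjection_orthogonal (y : F) :
    Metric.infDist y (K : Set F) = ‖Kᗮ.starProjection y‖ := by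
  rw [Metric.infDist_eq_iInf, starProjection_orthogonal_val, starProjection_minimal]
  simp [dist_eq_norm]

theorem inner_starProjection_starProjection_right (u v : F) :
    ⟪K.starProjection u, K.starProjection v⟫ = ⟪K.starProjection u, v⟫ := by
  rw [inner_starProjection_left_eq_right,
    K.starProjection_eq_self_iff.mpr (K.starProjection_apply_mem v),
    inner_starProjection_left_eq_right]

theorem hasGradientAt_half_sq_norm_starProjection_sub [CompleteSpace F] (r z : F) :
    HasGradientAt (fun u => ‖K.starProjection (u - r)‖ ^ 2 / 2) (K.starProjection (z - r)) z := by
  have hP : HasFDerivAt (fun u => ‖K.starProjection (u - r)‖ ^ 2)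
      (2 • innerSL ℝ (K.starProjection (z - r)) ∘L K.starProjection) z :=
    (K.starProjection.hasFDerivAt.comp z ((hasFDerivAt_id z).sub_const r)).norm_sq
  simp only [hasGradientAt_iff_hasFDerivAt, div_eq_mul_inv]
  refine (hP.mul_const 2⁻¹).congr_fderiv ?_
  ext v
  simp only [InnerProductSpace.toDual_apply_apply, smul_apply, ContinuousLinearMap.comp_apply,
    innerSL_apply_apply, K.inner_starProjection_starProjection_right]
  simp

end Submodule

section Gradient

variable {E F : Type*} [NormedAddCommGroup E] [InnerProductSpace ℝ E] [CompleteSpace E]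
  [NormedAddCommGroup F] [InnerProductSpace ℝ F] [CompleteSpace F]

theorem HasGradientAt.fun_sum {ι : Type*} {s : Finset ι} {f : ι → E → ℝ} {f' : ι → E} {x : E}
    (hf : ∀ i ∈ s, HasGradientAt (f i) (f' i) x) :
    HasGradientAt (fun y => ∑ i ∈ s, f i y) (∑ i ∈ s, f' i) x := by
  rw [hasGradientAt_iff_hasFDerivAt, map_sum]
  exact HasFDerivAt.fun_sum hf

theorem HasGradientAt.const_mul {f : E → ℝ} {f' x : E} (hf : HasGradientAt f f' x) (c : ℝ) :
    HasGradientAt (fun y => c * f y) (c • f') x := by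
  rw [hasGradientAt_iff_hasFDerivAt, map_smul]
  exact HasFDerivAt.const_mul hf c

theorem HasGradientAt.comp_continuousLinearMap {g : F → ℝ} {g' : F} (L : E →L[ℝ] F) {x : E}
    (hg : HasGradientAt g g' (L x)) :
    HasGradientAt (fun y => g (L y)) (ContinuousLinearMap.adjoint L g') x := by
  rw [hasGradientAt_iff_hasFDerivAt] at hg ⊢
  refine (hg.comp x L.hasFDerivAt).congr_fderiv ?_
  ext y
  simp [ContinuousLinearMap.adjoint_inner_left]

theorem lipschitzWith_adjoint_starProjection_sub (K : Submodule ℝ F) [K.HasOrthogonalProjection]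
    (L : E →L[ℝ] F) (r : F) :
    LipschitzWith (‖L‖₊ ^ 2) fun x => ContinuousLinearMap.adjoint L (K.starProjection (L x - r)) := by
  have h := (ContinuousLinearMap.adjoint L).lipschitz.comp <| K.lipschitzWith_starProjection.comp <|
    (IsometryEquiv.subRight r).isometry.lipschitz.comp L.lipschitz
  rwa [LinearIsometryEquiv.nnnorm_map, one_mul, one_mul, ← sq] at h

end Gradient

theorem stmt_0_general {H : Type*} [NormedAddCommGroup H] [InnerProductSpace ℝ H] [CompleteSpace H]
    {ι : Type*} [Fintype ι]
    (G : ι → Type*) [∀ i, NormedAddCommGroup (G i)] [∀ i, InnerProductSpace ℝ (G i)]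
    [∀ i, CompleteSpace (G i)]
    (V : ∀ i, Submodule ℝ (G i))
    [∀ i, CompleteSpace (V i)]
    (r : ∀ i, G i) (L : ∀ i, H →L[ℝ] G i)
    (α : ι → ℝ) (hα : ∀ i, 0 < α i)
    (h : H → ℝ)
    (hdef : ∀ x, h x =
      (1 / 2) * ∑ i, α i * (Metric.infDist (L i x - r i) (V i : Set (G i))) ^ 2) :
    ConvexOn ℝ Set.univ h ∧
    (∀ x, HasGradientAt h
      (∑ i, α i • ContinuousLinearMap.adjoint (L i)
        (((V i)ᗮ.orthogonalProjectionOnto (L i x - r i) : G i))) x) ∧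
    LipschitzWith (Real.toNNReal (∑ i, α i * ‖L i‖ ^ 2))
      (fun x => ∑ i, α i • ContinuousLinearMap.adjoint (L i)
        (((V i)ᗮ.orthogonalProjectionOnto (L i x - r i) : G i))) := by
  obtain rfl : h = fun x => ∑ i, α i * (‖(V i)ᗮ.starProjection (L i x - r i)‖ ^ 2 / 2) := by
    funext x
    simp only [hdef, Finset.mul_sum, Submodule.infDist_eq_norm_starProjection_orthogonal]
    exact Finset.sum_congr rfl fun i _ => by ring
  have hβ : ∑ i, ‖α i‖₊ * ‖L i‖₊ ^ 2 = Real.toNNReal (∑ i, α i * ‖L i‖ ^ 2) := by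
    have hnonneg i : 0 ≤ α i * ‖L i‖ ^ 2 := mul_nonneg (hα i).le (sq_nonneg _)
    rw [Real.toNNReal_sum_of_nonneg fun i _ => hnonneg i]
    refine Finset.sum_congr rfl fun i _ => NNReal.eq ?_
    rw [Real.coe_toNNReal _ (hnonneg i)]
    simp [abs_of_pos (hα i)]
  refine ⟨?_, fun x => ?_, ?_⟩
  · refine ConvexOn.fun_sum convex_univ fun i _ => ?_
    exact (convexOn_univ_half_sq_norm_comp_affineMap ((V i)ᗮ.starProjection.toLinearMap.toAffineMap.comp
      ((L i).toLinearMap.toAffineMap - AffineMap.const ℝ H (r i)))).smul (hα i).le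
  · exact HasGradientAt.fun_sum fun i _ =>
      (((V i)ᗮ.hasGradientAt_half_sq_norm_starProjection_sub (r i) (L i x)).comp_continuousLinearMap
        (L i)).const_mul (α i)
  · rw [← hβ]
    exact LipschitzWith.finset_sum fun i _ =>
      (lipschitzWith_smul (α i)).comp (lipschitzWith_adjoint_starProjection_sub (V i)ᗮ (L i) (r i))

/-- Let `H` be a real Hilbert space, `I` a nonempty finite index set and,
for every `i ∈ I`, `G i` a real Hilbert space, `V i` a closed linear subspace of `G i`,
`r i ∈ G i`, `L i : H → G i` a nonzero bounded linear operator and `α i > 0`.  Set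
`h x = (1/2) ∑ i, α i * d_{V i}(L i x − r i)²`.  Then `h` is convex and Fréchet
differentiable with gradient `∇h(x) = ∑ i, α i • L i* (proj_{(V i)ᗮ} (L i x − r i))`,
and `∇h` is Lipschitz with constant `β = ∑ i, α i * ‖L i‖²`. -/
theorem stmt_0 {H : Type*} [NormedAddCommGroup H] [InnerProductSpace ℝ H] [CompleteSpace H]
    {ι : Type*} [Fintype ι] [Nonempty ι]
    (G : ι → Type*) [∀ i, NormedAddCommGroup (G i)] [∀ i, InnerProductSpace ℝ (G i)]
    [∀ i, CompleteSpace (G i)]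
    (V : ∀ i, Submodule ℝ (G i)) (hVclosed : ∀ i, IsClosed (V i : Set (G i)))
    [∀ i, CompleteSpace (V i)]
    (r : ∀ i, G i) (L : ∀ i, H →L[ℝ] G i) (hL : ∀ i, L i ≠ 0)
    (α : ι → ℝ) (hα : ∀ i, 0 < α i)
    (h : H → ℝ)
    (hdef : ∀ x, h x =
      (1 / 2) * ∑ i, α i * (Metric.infDist (L i x - r i) (V i : Set (G i))) ^ 2) :
    ConvexOn ℝ Set.univ h ∧
    (∀ x, HasGradientAt h
      (∑ i, α i • ContinuousLinearMap.adjoint (L i)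
        (((V i)ᗮ.orthogonalProjectionOnto (L i x - r i) : G i))) x) ∧
    LipschitzWith (Real.toNNReal (∑ i, α i * ‖L i‖ ^ 2))
      (fun x => ∑ i, α i • ContinuousLinearMap.adjoint (L i)
        (((V i)ᗮ.orthogonalProjectionOnto (L i x - r i) : G i))) :=
  stmt_0_general G V r L α hα h hdef
end

section
/- Let H be a real Hilbert space, let I be a nonempty finite index set and, for every i ∈ I, let G_i be a real Hilbert space, let V_i be a closed linear subspace of G_i, let r_i ∈ G_i, let L_i : H → G_i be a nonzero bounded linear operator, and let α_i > 0. Define h : H → ℝ by h(x) = (1/2) Σ_{i∈I} α_i d_{V_i}(L_i x − r_i)². Let γ > 0 and x ∈ H. Then prox_{γh} x is the unique point p ∈ H satisfying p + γ Σ_{i∈I} α_i L_i*( proj_{V_i^⊥}(L_i p) ) = x + γ Σ_{i∈I} α_i L_i*( proj_{V_i^⊥} r_i ). -/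
/-!
Since `d_V z = ‖proj_{V^⊥} z‖`, writing `Aᵢ = proj_{Vᵢ^⊥} ∘ Lᵢ` and `bᵢ = proj_{Vᵢ^⊥} rᵢ` turns `h`
into the least-squares function `½ ∑ αᵢ ‖Aᵢ y - bᵢ‖²`. The proximal objective
`γ h y + ½ ‖x - y‖²` is then the quadratic `½ ⟪S y, y⟫ - ⟪c, y⟫ + const` with
`S = 1 + γ ∑ αᵢ Aᵢ* Aᵢ` self-adjoint and `S ≥ 1`, and `c = x + γ ∑ αᵢ Aᵢ* bᵢ`. A minimizer of such a
quadratic solves `S p = c`, and `S` is injective. Finally `Aᵢ* Aᵢ = Lᵢ* proj_{Vᵢ^⊥} Lᵢ` and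
`Aᵢ* bᵢ = Lᵢ* proj_{Vᵢ^⊥} rᵢ`, the projection being self-adjoint and idempotent.
-/

open scoped RealInnerProductSpace
open ContinuousLinearMap

theorem Submodule.infDist_eq_norm_starProjection_orthogonal_s1 {E : Type*} [NormedAddCommGroup E]
    [InnerProductSpace ℝ E] (K : Submodule ℝ E) [K.HasOrthogonalProjection] (z : E) :
    Metric.infDist z K = ‖Kᗮ.starProjection z‖ := by
  rw [Metric.infDist_eq_iInf, starProjection_orthogonal_val, starProjection_minimal]
  simp_rw [dist_eq_norm]
  rfl

section Quadratic

variable {H : Type*} [NormedAddCommGroup H] [InnerProductSpace ℝ H]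

theorem LinearMap.IsSymmetric.eq_of_forall_quadratic_le {S : H →ₗ[ℝ] H} (hS : S.IsSymmetric)
    {c p : H} (hp : ∀ y, ⟪S p, p⟫ / 2 - ⟪c, p⟫ ≤ ⟪S y, y⟫ / 2 - ⟪c, y⟫) : S p = c := by
  have hexpand : ∀ (d : H) (t : ℝ), ⟪S (p + t • d), p + t • d⟫ / 2 - ⟪c, p + t • d⟫ =
      ⟪S p, p⟫ / 2 - ⟪c, p⟫ + t * ⟪S p - c, d⟫ + t * t / 2 * ⟪S d, d⟫ := by
    intro d t
    simp only [map_add, map_smul, inner_add_left, inner_add_right, inner_smul_left,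
      inner_smul_right, inner_sub_left, hS d p, real_inner_comm (S p) d, RCLike.conj_to_real]
    ring
  -- Along the direction `S p - c` the objective is `t ↦ t ‖S p - c‖² + O(t²)`, minimal at `t = 0`.
  have hdiscr := discrim_le_zero (a := ⟪S (S p - c), S p - c⟫ / 2) (b := ‖S p - c‖ ^ 2) (c := 0)
    fun t => by
      have := hp (p + t • (S p - c))
      rw [hexpand, real_inner_self_eq_norm_sq] at this
      linarith
  rw [discrim, mul_zero, sub_zero] at hdiscr
  have hnorm : ‖S p - c‖ ^ 2 = 0 := pow_eq_zero_iff two_ne_zero |>.1 (hdiscr.antisymm (by positivity))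
  simpa [sub_eq_zero] using hnorm

theorem LinearMap.injective_of_norm_sq_le_inner {S : H →ₗ[ℝ] H} (hS : ∀ y, ‖y‖ ^ 2 ≤ ⟪S y, y⟫) :
    Function.Injective S := by
  refine (injective_iff_map_eq_zero S).2 fun y hy => ?_
  simpa [hy] using hS y

end Quadratic

section LeastSquares

variable {H : Type*} [NormedAddCommGroup H] [InnerProductSpace ℝ H] [CompleteSpace H]
  {ι : Type*} [Fintype ι] {G : ι → Type*} [∀ i, NormedAddCommGroup (G i)]
  [∀ i, InnerProductSpace ℝ (G i)] [∀ i, CompleteSpace (G i)]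
  (A : ∀ i, H →L[ℝ] G i) (α : ι → ℝ) (γ : ℝ)

noncomputable def proxNormalOp : H →L[ℝ] H :=
  1 + γ • ∑ i, α i • (adjoint (A i) ∘L A i)

theorem proxNormalOp_apply (y : H) :
    proxNormalOp A α γ y = y + γ • ∑ i, α i • adjoint (A i) (A i y) := by
  simp [proxNormalOp, sum_apply]

theorem inner_proxNormalOp_left (u v : H) :
    ⟪proxNormalOp A α γ u, v⟫ = ⟪u, v⟫ + γ * ∑ i, α i * ⟪A i u, A i v⟫ := by
  simp [proxNormalOp_apply, inner_add_left, inner_smul_left, sum_inner, adjoint_inner_left]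

theorem proxNormalOp_isSymmetric : (proxNormalOp A α γ : H →ₗ[ℝ] H).IsSymmetric := fun u v => by
  rw [real_inner_comm _ u, coe_coe, inner_proxNormalOp_left, inner_proxNormalOp_left]
  simp only [real_inner_comm u, real_inner_comm (A _ u)]

theorem norm_sq_le_inner_proxNormalOp (hα : ∀ i, 0 ≤ α i) (hγ : 0 ≤ γ) (y : H) :
    ‖y‖ ^ 2 ≤ ⟪proxNormalOp A α γ y, y⟫ := by
  rw [inner_proxNormalOp_left, real_inner_self_eq_norm_sq, le_add_iff_nonneg_right]
  exact mul_nonneg hγ (Finset.sum_nonneg fun i _ => mul_nonneg (hα i) real_inner_self_nonneg)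

theorem proxNormalOp_injective (hα : ∀ i, 0 ≤ α i) (hγ : 0 ≤ γ) :
    Function.Injective (proxNormalOp A α γ) :=
  LinearMap.injective_of_norm_sq_le_inner (S := (proxNormalOp A α γ : H →ₗ[ℝ] H))
    (norm_sq_le_inner_proxNormalOp A α γ hα hγ)

theorem half_sum_norm_sub_sq_add (b : ∀ i, G i) (x y : H) :
    γ * (1 / 2 * ∑ i, α i * ‖A i y - b i‖ ^ 2) + ‖x - y‖ ^ 2 / 2 =
      ⟪proxNormalOp A α γ y, y⟫ / 2 - ⟪x + γ • ∑ i, α i • adjoint (A i) (b i), y⟫ +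
        (γ * (1 / 2 * ∑ i, α i * ‖b i‖ ^ 2) + ‖x‖ ^ 2 / 2) := by
  simp only [inner_proxNormalOp_left, norm_sub_sq_real, inner_add_left, inner_smul_left, sum_inner,
    adjoint_inner_left, real_inner_self_eq_norm_sq, mul_add, mul_sub, Finset.sum_add_distrib,
    Finset.sum_sub_distrib, RCLike.conj_to_real, real_inner_comm (A _ y),
    mul_left_comm (α _) (2 : ℝ), ← Finset.mul_sum]
  ring

theorem proxNormalOp_apply_eq_of_forall_le (b : ∀ i, G i) {x p : H}
    (hp : ∀ y, γ * (1 / 2 * ∑ i, α i * ‖A i p - b i‖ ^ 2) + ‖x - p‖ ^ 2 / 2 ≤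
      γ * (1 / 2 * ∑ i, α i * ‖A i y - b i‖ ^ 2) + ‖x - y‖ ^ 2 / 2) :
    proxNormalOp A α γ p = x + γ • ∑ i, α i • adjoint (A i) (b i) :=
  (proxNormalOp_isSymmetric A α γ).eq_of_forall_quadratic_le fun y => by
    have := hp y
    rw [half_sum_norm_sub_sq_add, half_sum_norm_sub_sq_add] at this
    simpa using this

end LeastSquares

theorem stmt_1_general {H : Type*} [NormedAddCommGroup H] [InnerProductSpace ℝ H] [CompleteSpace H]
    {ι : Type*} [Fintype ι]
    (G : ι → Type*) [∀ i, NormedAddCommGroup (G i)] [∀ i, InnerProductSpace ℝ (G i)]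
    [∀ i, CompleteSpace (G i)]
    (V : ∀ i, Submodule ℝ (G i))
    [∀ i, CompleteSpace (V i)]
    (r : ∀ i, G i) (L : ∀ i, H →L[ℝ] G i)
    (α : ι → ℝ) (hα : ∀ i, 0 < α i)
    (h : H → ℝ)
    (hdef : ∀ x, h x =
      (1 / 2) * ∑ i, α i * (Metric.infDist (L i x - r i) (V i : Set (G i))) ^ 2)
    (γ : ℝ) (hγ : 0 < γ) (x : H)
    (p : H)
    (hp : ∀ y, γ * h p + ‖x - p‖ ^ 2 / 2 ≤ γ * h y + ‖x - y‖ ^ 2 / 2) :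
    (p + γ • ∑ i, α i • ContinuousLinearMap.adjoint (L i)
        ((Submodule.orthogonalProjectionOnto (V i)ᗮ (L i p) : G i))
      = x + γ • ∑ i, α i • ContinuousLinearMap.adjoint (L i)
        ((Submodule.orthogonalProjectionOnto (V i)ᗮ (r i) : G i))) ∧
    (∀ q : H, q + γ • ∑ i, α i • ContinuousLinearMap.adjoint (L i)
        ((Submodule.orthogonalProjectionOnto (V i)ᗮ (L i q) : G i))
      = x + γ • ∑ i, α i • ContinuousLinearMap.adjoint (L i)
        ((Submodule.orthogonalProjectionOnto (V i)ᗮ (r i) : G i)) → q = p) := by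
  set P : ∀ i, G i →L[ℝ] G i := fun i => (V i)ᗮ.starProjection
  set A : ∀ i, H →L[ℝ] G i := fun i => P i ∘L L i
  have hA : ∀ i y, A i y = P i (L i y) := fun _ _ => rfl
  have hP : ∀ i z, P i (P i z) = P i z := fun i z =>
    Submodule.starProjection_eq_self_iff.2 (by simp [P])
  have hadj : ∀ i z, adjoint (A i) z = adjoint (L i) (P i z) := fun i z => by
    simp [A, P, adjoint_comp, (isSelfAdjoint_starProjection _).adjoint_eq]
  have hdist : ∀ i y, Metric.infDist (L i y - r i) (V i) = ‖A i y - P i (r i)‖ := fun i y => by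
    rw [Submodule.infDist_eq_norm_starProjection_orthogonal_s1, map_sub, hA]
  have hS : ∀ y, proxNormalOp A α γ y = y + γ • ∑ i, α i • adjoint (L i) (P i (L i y)) :=
    fun y => by simp only [proxNormalOp_apply, hadj, hA, hP]
  have hnormal := proxNormalOp_apply_eq_of_forall_le A α γ (fun i => P i (r i)) (x := x) (p := p)
    fun y => by simpa only [hdef, hdist] using hp y
  simp only [hadj, hP, hS] at hnormal
  simp only [Submodule.coe_orthogonalProjectionOnto_apply]
  refine ⟨hnormal, fun q hq => proxNormalOp_injective A α γ (fun i => (hα i).le) hγ.le ?_⟩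
  rw [hS, hS, hq, hnormal]

/-- In the setting of Example 2.2 of the paper, for `γ > 0` and `x ∈ H`,
the proximal point `prox_{γh} x` (i.e. the minimizer `p` of `y ↦ γ h(y) + ½‖x − y‖²`)
is the unique point `p` satisfying
`p + γ ∑ i α i • L i*(proj_{(V i)ᗮ}(L i p)) = x + γ ∑ i α i • L i*(proj_{(V i)ᗮ} (r i))`. -/
theorem stmt_1 {H : Type*} [NormedAddCommGroup H] [InnerProductSpace ℝ H] [CompleteSpace H]
    {ι : Type*} [Fintype ι] [Nonempty ι]
    (G : ι → Type*) [∀ i, NormedAddCommGroup (G i)] [∀ i, InnerProductSpace ℝ (G i)]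
    [∀ i, CompleteSpace (G i)]
    (V : ∀ i, Submodule ℝ (G i)) (hVclosed : ∀ i, IsClosed (V i : Set (G i)))
    [∀ i, CompleteSpace (V i)]
    (r : ∀ i, G i) (L : ∀ i, H →L[ℝ] G i) (hL : ∀ i, L i ≠ 0)
    (α : ι → ℝ) (hα : ∀ i, 0 < α i)
    (h : H → ℝ)
    (hdef : ∀ x, h x =
      (1 / 2) * ∑ i, α i * (Metric.infDist (L i x - r i) (V i : Set (G i))) ^ 2)
    (γ : ℝ) (hγ : 0 < γ) (x : H)
    (p : H)
    (hp : ∀ y, γ * h p + ‖x - p‖ ^ 2 / 2 ≤ γ * h y + ‖x - y‖ ^ 2 / 2) :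
    (p + γ • ∑ i, α i • ContinuousLinearMap.adjoint (L i)
        ((Submodule.orthogonalProjectionOnto (V i)ᗮ (L i p) : G i))
      = x + γ • ∑ i, α i • ContinuousLinearMap.adjoint (L i)
        ((Submodule.orthogonalProjectionOnto (V i)ᗮ (r i) : G i))) ∧
    (∀ q : H, q + γ • ∑ i, α i • ContinuousLinearMap.adjoint (L i)
        ((Submodule.orthogonalProjectionOnto (V i)ᗮ (L i q) : G i))
      = x + γ • ∑ i, α i • ContinuousLinearMap.adjoint (L i)
        ((Submodule.orthogonalProjectionOnto (V i)ᗮ (r i) : G i)) → q = p) :=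
  stmt_1_general G V r L α hα h hdef γ hγ x p hp
end

section
/- Let C be a nonempty closed convex subset of a real Hilbert space H, let β > 0, let φ : ℝ → ℝ be even, convex, and differentiable with a β-Lipschitzian derivative, and set h = φ ∘ d_C. Then h : H → ℝ is convex and Fréchet differentiable, and its gradient ∇h is Lipschitz continuous with constant β. -/
/-!
With `P` the projection onto `C` and `d = d_C`, the gradient is
`∇h x = (φ' (d x) / d x) • (x - P x)`. The obtuse-angle characterisation of `P` gives
`⟪x - P x, y - x⟫ ≤ d x * (d y - d x)`, which together with the tangent-line inequality
for `φ` shows `h x + ⟪∇h x, y - x⟫ ≤ h y`. Conversely `h y ≤ φ ‖y - P x‖`, and the descent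
lemma for `φ` together with `φ' t ≤ β t` (as `φ' 0 = 0` by evenness) gives
`h y ≤ h x + ⟪∇h x, y - x⟫ + β / 2 * ‖y - x‖ ^ 2`. A function squeezed between these two
first-order bounds is convex and differentiable with gradient `∇h`, and the usual
co-coercivity argument shows that `∇h` is `β`-Lipschitz.
-/

open Set Metric
open scoped RealInnerProductSpace NNReal

theorem ConvexOn.add_mul_sub_le_of_hasDerivAt {f : ℝ → ℝ} {S : Set ℝ} {a b d : ℝ}
    (hf : ConvexOn ℝ S f) (ha : a ∈ S) (hb : b ∈ S) (hd : HasDerivAt f d a) :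
    f a + d * (b - a) ≤ f b := by
  rcases lt_trichotomy a b with hab | rfl | hba
  · have := hf.le_slope_of_hasDerivAt ha hb hab hd
    rw [slope_def_field, le_div_iff₀ (sub_pos.2 hab)] at this
    linarith
  · simp
  · have := hf.slope_le_of_hasDerivAt hb ha hba hd
    rw [slope_def_field, div_le_iff₀ (sub_pos.2 hba)] at this
    linarith

theorem ConvexOn.monotone_of_hasDerivAt {f f' : ℝ → ℝ} (hf : ConvexOn ℝ univ f)
    (hd : ∀ t, HasDerivAt f (f' t) t) : Monotone f' := by
  intro s t hst
  simpa only [(hd _).deriv] using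
    hf.monotoneOn_deriv (fun t _ => (hd t).differentiableAt) (mem_univ s) (mem_univ t) hst

theorem le_add_mul_sub_add_sq_of_lipschitzWith {f f' : ℝ → ℝ} {K : ℝ≥0}
    (hd : ∀ t, HasDerivAt f (f' t) t) (hlip : LipschitzWith K f') (a b : ℝ) :
    f b ≤ f a + f' a * (b - a) + K / 2 * (b - a) ^ 2 := by
  -- `ψ` has the monotone derivative `K t - f' t`, so it lies above its tangent at `a`
  set ψ : ℝ → ℝ := fun t => K / 2 * t ^ 2 - f t
  have hψ : ∀ t, HasDerivAt ψ (K * t - f' t) t := fun t =>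
    (((hasDerivAt_pow 2 t).const_mul ((K : ℝ) / 2)).sub (hd t)).congr_deriv (by ring)
  have hmono : Monotone fun t => K * t - f' t := by
    intro s t hst
    have := hlip.dist_le_mul t s
    rw [Real.dist_eq, Real.dist_eq, abs_of_nonneg (sub_nonneg.2 hst)] at this
    linarith [le_abs_self (f' t - f' s)]
  have hψconv : ConvexOn ℝ univ ψ :=
    Monotone.convexOn_univ_of_deriv (fun t => (hψ t).differentiableAt)
      ((funext fun t => (hψ t).deriv) ▸ hmono)
  have := hψconv.add_mul_sub_le_of_hasDerivAt (mem_univ a) (mem_univ b) (hψ a)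
  linear_combination this

theorem HasDerivAt.eq_zero_of_even {f : ℝ → ℝ} {d : ℝ} (heven : ∀ t, f (-t) = f t)
    (hd : HasDerivAt f d 0) : d = 0 := by
  have h := deriv_comp_neg f (0 : ℝ)
  simp only [heven, neg_zero, hd.deriv] at h
  linarith

section FirstOrderBounds

variable {E : Type*} [NormedAddCommGroup E] [InnerProductSpace ℝ E] {f : E → ℝ} {F : E → E}

theorem convexOn_univ_of_add_inner_le (hlow : ∀ x y, f x + ⟪F x, y - x⟫ ≤ f y) :
    ConvexOn ℝ univ f := by
  refine ⟨convex_univ, fun x _ y _ a b ha hb hab => ?_⟩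
  set z := a • x + b • y
  have hbal : a • (x - z) + b • (y - z) = 0 := by
    rw [smul_sub, smul_sub, ← add_sub_add_comm, ← add_smul, hab, one_smul, sub_self]
  have hinner : a * ⟪F z, x - z⟫ + b * ⟪F z, y - z⟫ = 0 := by
    rw [← real_inner_smul_right, ← real_inner_smul_right, ← inner_add_right, hbal,
      inner_zero_right]
  have hx := mul_le_mul_of_nonneg_left (hlow z x) ha
  have hy := mul_le_mul_of_nonneg_left (hlow z y) hb
  have hfz : f z = a * f z + b * f z := by rw [← add_mul, hab, one_mul]
  simp only [smul_eq_mul]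
  linarith

theorem hasGradientAt_of_add_inner_le_of_le_add_inner_add_sq [CompleteSpace E] {x g : E}
    {c : ℝ} (hlow : ∀ y, f x + ⟪g, y - x⟫ ≤ f y)
    (hup : ∀ y, f y ≤ f x + ⟪g, y - x⟫ + c * ‖y - x‖ ^ 2) : HasGradientAt f g x := by
  rw [hasGradientAt_iff_hasFDerivAt, hasFDerivAt_iff_isLittleO_nhds_zero]
  refine (Asymptotics.IsBigO.of_bound c (Filter.Eventually.of_forall fun z => ?_)).trans_isLittleO
    (Asymptotics.isLittleO_norm_pow_id one_lt_two)
  have hlow := hlow (x + z)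
  have hup := hup (x + z)
  rw [add_sub_cancel_left] at hlow hup
  rw [InnerProductSpace.toDual_apply_apply, Real.norm_eq_abs, norm_pow, norm_norm, abs_le]
  constructor <;> nlinarith [sq_nonneg ‖z‖]

theorem add_inner_add_inv_mul_norm_sub_sq_le {L : ℝ} (hL : 0 < L)
    (hlow : ∀ x y, f x + ⟪F x, y - x⟫ ≤ f y)
    (hup : ∀ x y, f y ≤ f x + ⟪F x, y - x⟫ + L / 2 * ‖y - x‖ ^ 2) (x y : E) :
    f y + ⟪F y, x - y⟫ + (2 * L)⁻¹ * ‖F x - F y‖ ^ 2 ≤ f x := by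
  set v := F x - F y
  -- a gradient step of length `L⁻¹` from `x` for `f - ⟪F y, ·⟫`, which is minimal at `y`
  set z := x - L⁻¹ • v with hz
  have hlow := hlow y z
  have hup := hup x z
  have hzy : z - y = (x - y) - L⁻¹ • v := by rw [hz]; abel
  have hzx : z - x = -(L⁻¹ • v) := by rw [hz]; abel
  rw [hzy, inner_sub_right, real_inner_smul_right] at hlow
  rw [hzx, inner_neg_right, real_inner_smul_right, norm_neg, norm_smul, Real.norm_eq_abs,
    abs_of_pos (inv_pos.2 hL), mul_pow] at hup
  have hv : ⟪F x, v⟫ - ⟪F y, v⟫ = ‖v‖ ^ 2 := by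
    rw [← inner_sub_left, real_inner_self_eq_norm_sq]
  have hLinv : L * L⁻¹ = 1 := mul_inv_cancel₀ hL.ne'
  linear_combination hlow + hup - L⁻¹ * hv + L⁻¹ * ‖v‖ ^ 2 / 2 * hLinv

theorem lipschitzWith_of_add_inner_le_of_le_add_inner_add_sq {K : ℝ≥0} (hK : 0 < K)
    (hlow : ∀ x y, f x + ⟪F x, y - x⟫ ≤ f y)
    (hup : ∀ x y, f y ≤ f x + ⟪F x, y - x⟫ + K / 2 * ‖y - x‖ ^ 2) :
    LipschitzWith K F := by
  refine LipschitzWith.of_dist_le_mul fun x y => ?_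
  rw [dist_eq_norm, dist_eq_norm]
  have hcoco : (K : ℝ)⁻¹ * ‖F x - F y‖ ^ 2 ≤ ⟪F x - F y, x - y⟫ := by
    have hxy := add_inner_add_inv_mul_norm_sub_sq_le (L := K) hK hlow hup x y
    have hyx := add_inner_add_inv_mul_norm_sub_sq_le (L := K) hK hlow hup y x
    rw [norm_sub_rev] at hyx
    have : ⟪F x - F y, x - y⟫ = -⟪F x, y - x⟫ - ⟪F y, x - y⟫ := by
      rw [inner_sub_left, ← neg_sub y x, inner_neg_right]
    rw [this]
    linear_combination hxy + hyx
  rcases (norm_nonneg (F x - F y)).eq_or_lt with h0 | hpos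
  · rw [← h0]
    positivity
  refine le_of_mul_le_mul_left ?_ hpos
  calc ‖F x - F y‖ * ‖F x - F y‖ = K * ((K : ℝ)⁻¹ * ‖F x - F y‖ ^ 2) := by
        field_simp
    _ ≤ K * (‖F x - F y‖ * ‖x - y‖) :=
          mul_le_mul_of_nonneg_left (hcoco.trans (real_inner_le_norm _ _)) K.2
    _ = ‖F x - F y‖ * (K * ‖x - y‖) := by ring

end FirstOrderBounds

section DistanceFunction

variable {H : Type*} [NormedAddCommGroup H] [InnerProductSpace ℝ H] {C : Set H}

theorem exists_mem_norm_sub_eq_infDist_and_inner_le_zero (hne : C.Nonempty) (hcomp : IsComplete C)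
    (hconv : Convex ℝ C) (x : H) :
    ∃ p ∈ C, ‖x - p‖ = infDist x C ∧ ∀ w ∈ C, ⟪x - p, w - p⟫ ≤ 0 := by
  obtain ⟨p, hpC, hp⟩ := exists_norm_eq_iInf_of_complete_convex hne hcomp hconv x
  refine ⟨p, hpC, ?_, (norm_eq_iInf_iff_real_inner_le_zero hconv hpC).1 hp⟩
  simp only [hp, infDist_eq_iInf, dist_eq_norm]

variable {x p : H}

theorem inner_sub_le_norm_mul_infDist (hp : p ∈ C) (hobt : ∀ w ∈ C, ⟪x - p, w - p⟫ ≤ 0)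
    (y : H) : ⟪x - p, y - p⟫ ≤ ‖x - p‖ * infDist y C := by
  rcases (norm_nonneg (x - p)).eq_or_lt with h0 | hpos
  · rw [eq_comm, norm_eq_zero] at h0
    simp [h0]
  rw [← div_le_iff₀' hpos]
  refine (le_infDist ⟨p, hp⟩).2 fun w hw => ?_
  rw [div_le_iff₀' hpos, dist_eq_norm]
  calc ⟪x - p, y - p⟫ ≤ ⟪x - p, y - p⟫ - ⟪x - p, w - p⟫ := by linarith [hobt w hw]
    _ = ⟪x - p, y - w⟫ := by rw [← inner_sub_right, sub_sub_sub_cancel_right]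
    _ ≤ ‖x - p‖ * ‖y - w‖ := real_inner_le_norm _ _

theorem inner_sub_le_infDist_mul_sub (hp : p ∈ C) (hpx : ‖x - p‖ = infDist x C)
    (hobt : ∀ w ∈ C, ⟪x - p, w - p⟫ ≤ 0) (y : H) :
    ⟪x - p, y - x⟫ ≤ infDist x C * (infDist y C - infDist x C) := by
  have hsplit : ⟪x - p, y - x⟫ = ⟪x - p, y - p⟫ - ‖x - p‖ ^ 2 := by
    rw [← real_inner_self_eq_norm_sq, ← inner_sub_right, sub_sub_sub_cancel_right]
  have := inner_sub_le_norm_mul_infDist hp hobt y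
  rw [hsplit, ← hpx]
  linarith

variable {φ φ' : ℝ → ℝ}

theorem comp_infDist_add_inner_le (htan : ∀ a b, φ a + φ' a * (b - a) ≤ φ b)
    (hnonneg : ∀ a, 0 ≤ a → 0 ≤ φ' a) (hp : p ∈ C) (hpx : ‖x - p‖ = infDist x C)
    (hobt : ∀ w ∈ C, ⟪x - p, w - p⟫ ≤ 0) (y : H) :
    φ (infDist x C) + ⟪(φ' (infDist x C) / infDist x C) • (x - p), y - x⟫ ≤
      φ (infDist y C) := by
  have hkey := inner_sub_le_infDist_mul_sub hp hpx hobt y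
  set a := infDist x C
  have ha0 : 0 ≤ a := infDist_nonneg
  clear_value a
  rw [real_inner_smul_left]
  rcases ha0.eq_or_lt with ha | ha
  · rw [← ha, div_zero, zero_mul, add_zero]
    have := htan 0 (infDist y C)
    nlinarith [hnonneg 0 le_rfl, (infDist_nonneg : 0 ≤ infDist y C)]
  calc φ a + φ' a / a * ⟪x - p, y - x⟫ ≤ φ a + φ' a / a * (a * (infDist y C - a)) := by
        gcongr
        exact div_nonneg (hnonneg a ha0) ha0
    _ = φ a + φ' a * (infDist y C - a) := by field_simp
    _ ≤ φ (infDist y C) := htan a _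

theorem comp_infDist_le_add_inner_add_sq {L : ℝ}
    (hdesc : ∀ a b, φ b ≤ φ a + φ' a * (b - a) + L / 2 * (b - a) ^ 2)
    (hmono : MonotoneOn φ (Ici 0)) (hle : ∀ a, 0 ≤ a → φ' a ≤ L * a) (hp : p ∈ C)
    (hpx : ‖x - p‖ = infDist x C) (y : H) :
    φ (infDist y C) ≤
      φ (infDist x C) + ⟪(φ' (infDist x C) / infDist x C) • (x - p), y - x⟫ +
        L / 2 * ‖y - x‖ ^ 2 := by
  have hyb : φ (infDist y C) ≤ φ ‖y - p‖ :=
    hmono infDist_nonneg (norm_nonneg _) (by simpa [dist_eq_norm] using infDist_le_dist_of_mem hp)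
  set a := infDist x C
  have ha0 : 0 ≤ a := infDist_nonneg
  clear_value a
  set b := ‖y - p‖
  rcases ha0.eq_or_lt with ha | ha
  · have hxp : x = p := by rw [← sub_eq_zero, ← norm_eq_zero, hpx, ← ha]
    subst hxp
    have := hdesc 0 b
    rw [← ha, div_zero, zero_smul, inner_zero_left, add_zero]
    nlinarith [hle 0 le_rfl, norm_nonneg (y - x)]
  set T := ⟪x - p, y - p⟫
  have hT : T ≤ a * b := hpx ▸ real_inner_le_norm _ _
  have hinner : ⟪x - p, y - x⟫ = T - a ^ 2 := by
    rw [← hpx, ← real_inner_self_eq_norm_sq, ← inner_sub_right, sub_sub_sub_cancel_right]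
  have hnorm : ‖y - x‖ ^ 2 = b ^ 2 - 2 * T + a ^ 2 := by
    rw [← sub_sub_sub_cancel_right y x p, norm_sub_sq_real, hpx, real_inner_comm]
  have hgap : 0 ≤ (a * b - T) * (L * a - φ' a) / a :=
    div_nonneg (mul_nonneg (by linarith) (by linarith [hle a ha.le])) ha.le
  rw [real_inner_smul_left, hinner, hnorm]
  calc φ (infDist y C) ≤ φ a + φ' a * (b - a) + L / 2 * (b - a) ^ 2 := hyb.trans (hdesc a b)
    _ = φ a + φ' a / a * (T - a ^ 2) + L / 2 * (b ^ 2 - 2 * T + a ^ 2)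
        - (a * b - T) * (L * a - φ' a) / a := by field_simp; ring
    _ ≤ _ := by linarith

end DistanceFunction

/-- Let `C` be a nonempty closed convex subset of a real Hilbert space `H`,
`β > 0`, and `φ : ℝ → ℝ` even, convex, and differentiable with a `β`-Lipschitzian
derivative.  Then `h = φ ∘ d_C` is convex and Fréchet differentiable with a
`β`-Lipschitzian gradient. -/
theorem stmt_2 {H : Type*} [NormedAddCommGroup H] [InnerProductSpace ℝ H] [CompleteSpace H]
    (C : Set H) (hCne : C.Nonempty) (hCclosed : IsClosed C) (hCconv : Convex ℝ C)
    (β : ℝ) (hβ : 0 < β)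
    (φ : ℝ → ℝ) (heven : ∀ t, φ (-t) = φ t) (hconv : ConvexOn ℝ Set.univ φ)
    (φ' : ℝ → ℝ) (hderiv : ∀ t, HasDerivAt φ (φ' t) t)
    (hlip : LipschitzWith (Real.toNNReal β) φ')
    (h : H → ℝ) (hdef : ∀ x, h x = φ (Metric.infDist x C)) :
    ConvexOn ℝ Set.univ h ∧
    (∀ x, DifferentiableAt ℝ h x) ∧
    LipschitzWith (Real.toNNReal β) (fun x => gradient h x) := by
  obtain rfl : h = fun x => φ (infDist x C) := funext hdef
  set K := β.toNNReal
  have hK : 0 < K := Real.toNNReal_pos.2 hβ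
  have hφ'0 : φ' 0 = 0 := (hderiv 0).eq_zero_of_even heven
  have htan : ∀ a b, φ a + φ' a * (b - a) ≤ φ b := fun a b =>
    hconv.add_mul_sub_le_of_hasDerivAt (mem_univ a) (mem_univ b) (hderiv a)
  have hnonneg : ∀ a, 0 ≤ a → 0 ≤ φ' a := fun a ha =>
    hφ'0 ▸ hconv.monotone_of_hasDerivAt hderiv ha
  have hmono : MonotoneOn φ (Ici 0) := fun a ha b _ hab => by
    nlinarith [htan a b, hnonneg a ha]
  have hle : ∀ a, 0 ≤ a → φ' a ≤ K * a := fun a ha => by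
    simpa [hφ'0, abs_of_nonneg ha, Real.dist_eq] using
      (le_abs_self _).trans (hlip.dist_le_mul a 0)
  choose P hPC hPx hPobt using
    exists_mem_norm_sub_eq_infDist_and_inner_le_zero hCne hCclosed.isComplete hCconv
  set F : H → H := fun x => (φ' (infDist x C) / infDist x C) • (x - P x)
  have hlow : ∀ x y, φ (infDist x C) + ⟪F x, y - x⟫ ≤ φ (infDist y C) := fun x y =>
    comp_infDist_add_inner_le htan hnonneg (hPC x) (hPx x) (hPobt x) y
  have hup : ∀ x y,
      φ (infDist y C) ≤ φ (infDist x C) + ⟪F x, y - x⟫ + K / 2 * ‖y - x‖ ^ 2 := fun x y =>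
    comp_infDist_le_add_inner_add_sq (L := K)
      (le_add_mul_sub_add_sq_of_lipschitzWith hderiv hlip) hmono hle (hPC x) (hPx x) y
  have hgrad : ∀ x, HasGradientAt (fun x => φ (infDist x C)) (F x) x := fun x =>
    hasGradientAt_of_add_inner_le_of_le_add_inner_add_sq (hlow x) (hup x)
  refine ⟨convexOn_univ_of_add_inner_le hlow, fun x => (hgrad x).differentiableAt, ?_⟩
  simpa only [fun x => (hgrad x).gradient] using
    lipschitzWith_of_add_inner_le_of_le_add_inner_add_sq hK hlow hup
end

section
/- Let C be a nonempty closed convex subset of a real Hilbert space H, let β > 0, let φ : ℝ → ℝ be even, convex, and differentiable with a β-Lipschitzian derivative, and set h = φ ∘ d_C. Then for every x ∈ H, the gradient of h at x equals (φ'(d_C(x))/d_C(x)) (x − proj_C x) if x ∉ C, and equals 0 if x ∈ C. -/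
/-!
Off `C`, with `p = proj_C x` and `u = (x - p) / ‖x - p‖`, the distance `d_C` is squeezed between
the affine function `y ↦ d_C x + ⟪u, y - x⟫` (a lower bound, by the variational inequality
`⟪x - p, c - p⟫ ≤ 0` characterising the projection onto a convex set) and the smooth function
`y ↦ ‖y - p‖`. Both touch `d_C` at `x` and have gradient `u` there, so `∇ d_C x = u`, and the chain
rule gives the formula. On `C`, evenness forces `φ' 0 = 0`, so the Lipschitz bound on `φ'` gives
`|φ t - φ 0| ≤ β t²`, hence `|h y - h x| ≤ β ‖y - x‖²` and `∇ h x = 0`.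
-/

open Metric Filter Asymptotics Topology InnerProductSpace
open scoped RealInnerProductSpace

theorem HasDerivAt.eq_zero_of_even_s3 {φ : ℝ → ℝ} {a : ℝ} (heven : ∀ t, φ (-t) = φ t)
    (h : HasDerivAt φ a 0) : a = 0 := by
  have hodd := deriv_comp_neg (f := φ) (x := 0)
  simp only [heven, neg_zero, h.deriv] at hodd
  linarith

theorem abs_sub_le_mul_sq_of_lipschitzWith_deriv {φ φ' : ℝ → ℝ} {K : NNReal}
    (hφ : ∀ t, HasDerivAt φ (φ' t) t) (hlip : LipschitzWith K φ') (h0 : φ' 0 = 0) (t : ℝ) :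
    |φ t - φ 0| ≤ K * t ^ 2 := by
  have hbound : ∀ s ∈ closedBall (0 : ℝ) |t|, ‖φ' s‖ ≤ K * |t| := fun s hs => by
    calc ‖φ' s‖ = dist (φ' s) (φ' 0) := by rw [h0, dist_zero_right]
      _ ≤ K * dist s 0 := hlip.dist_le_mul s 0
      _ ≤ K * |t| := by gcongr; exact hs
  have := (convex_closedBall (0 : ℝ) |t|).norm_image_sub_le_of_norm_hasDerivWithin_le
    (fun s _ => (hφ s).hasDerivWithinAt) hbound (mem_closedBall_self (abs_nonneg t))
    (show t ∈ closedBall (0 : ℝ) |t| by simp)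
  simpa [mul_assoc, ← sq, sq_abs] using this

theorem Metric.infDist_eq_dist_of_forall_dist_le {X : Type*} [PseudoMetricSpace X] {s : Set X}
    {x p : X} (hp : p ∈ s) (hmin : ∀ y ∈ s, dist x p ≤ dist x y) : infDist x s = dist x p :=
  le_antisymm (infDist_le_dist_of_mem hp) ((le_infDist ⟨p, hp⟩).2 hmin)

section InnerProductSpace

variable {F : Type*} [NormedAddCommGroup F] [InnerProductSpace ℝ F]

theorem add_inner_le_infDist_of_inner_le_zero {C : Set F} {x p : F} (hp : p ∈ C)
    (hvar : ∀ c ∈ C, ⟪x - p, c - p⟫ ≤ 0) (y : F) :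
    ‖x - p‖ + ⟪‖x - p‖⁻¹ • (x - p), y - x⟫ ≤ infDist y C := by
  rcases (norm_nonneg (x - p)).eq_or_lt with hd | hd
  · simp [← hd, infDist_nonneg]
  refine (le_infDist ⟨p, hp⟩).2 fun c hc => ?_
  have hsplit : ⟪x - p, y - c⟫ = ⟪x - p, y - x⟫ + ‖x - p‖ ^ 2 - ⟪x - p, c - p⟫ := by
    rw [← real_inner_self_eq_norm_sq, ← inner_add_right, ← inner_sub_right]
    congr 1
    abel
  have hcs : ⟪x - p, y - c⟫ ≤ ‖x - p‖ * dist y c := by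
    rw [dist_eq_norm]
    exact real_inner_le_norm _ _
  have hmul : ⟪x - p, y - x⟫ + ‖x - p‖ ^ 2 ≤ ‖x - p‖ * dist y c := by
    linarith [hvar c hc]
  calc ‖x - p‖ + ⟪‖x - p‖⁻¹ • (x - p), y - x⟫
      = ‖x - p‖⁻¹ * (⟪x - p, y - x⟫ + ‖x - p‖ ^ 2) := by
        rw [real_inner_smul_left]; field_simp; ring
    _ ≤ ‖x - p‖⁻¹ * (‖x - p‖ * dist y c) := by gcongr
    _ = dist y c := by field_simp

variable [CompleteSpace F]

theorem HasGradientAt.of_le_of_le {f l g : F → ℝ} {v x : F}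
    (hl : HasGradientAt l v x) (hg : HasGradientAt g v x)
    (hlf : ∀ᶠ y in 𝓝 x, l y ≤ f y) (hfg : ∀ᶠ y in 𝓝 x, f y ≤ g y)
    (hlx : l x = f x) (hgx : g x = f x) : HasGradientAt f v x := by
  rw [hasGradientAt_iff_isLittleO, isLittleO_iff] at *
  intro c hc
  filter_upwards [hl hc, hg hc, hlf, hfg] with y hly hgy hlfy hfgy
  rw [Real.norm_eq_abs, abs_le] at *
  constructor <;> linarith

theorem hasGradientAt_zero_of_isBigO_sq {f : F → ℝ} {x : F}
    (hf : (fun y => f y - f x) =O[𝓝 x] fun y => ‖y - x‖ ^ 2) : HasGradientAt f 0 x := by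
  rw [hasGradientAt_iff_isLittleO]
  simpa only [inner_zero_left, sub_zero] using
    hf.trans_isLittleO (isLittleO_pow_sub_sub x one_lt_two)

theorem HasDerivAt.comp_hasGradientAt {φ : ℝ → ℝ} {a : ℝ} {f : F → ℝ} {v x : F}
    (hφ : HasDerivAt φ a (f x)) (hf : HasGradientAt f v x) :
    HasGradientAt (fun y => φ (f y)) (a • v) x := by
  rw [hasGradientAt_iff_hasFDerivAt] at hf ⊢
  rw [map_smul]
  exact hφ.comp_hasFDerivAt x hf

theorem hasGradientAt_const_add_inner_sub (a : ℝ) (v x : F) :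
    HasGradientAt (fun y => a + ⟪v, y - x⟫) v x := by
  rw [hasGradientAt_iff_isLittleO]
  simp

theorem hasGradientAt_norm_sub {p x : F} (hx : x ≠ p) :
    HasGradientAt (fun y => ‖y - p‖) (‖x - p‖⁻¹ • (x - p)) x := by
  have hsq : HasFDerivAt (fun y => ‖y - p‖ ^ 2) (2 • innerSL ℝ (x - p)) x := by
    simpa using ((hasFDerivAt_id x).sub_const p).norm_sq
  have hpos : 0 < ‖x - p‖ := norm_pos_iff.2 (sub_ne_zero.2 hx)
  have hsqrt := hsq.sqrt (by positivity)
  simp only [Real.sqrt_sq (norm_nonneg _)] at hsqrt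
  rw [hasGradientAt_iff_hasFDerivAt]
  refine hsqrt.congr_fderiv (ContinuousLinearMap.ext fun w => ?_)
  rw [toDual_apply_apply, real_inner_smul_left]
  simp only [smul_apply, innerSL_apply_apply, smul_eq_mul, nsmul_eq_mul, Nat.cast_ofNat]
  field_simp

theorem Convex.hasGradientAt_infDist {C : Set F} (hC : Convex ℝ C) {x p : F} (hp : p ∈ C)
    (hmin : ∀ y ∈ C, dist x p ≤ dist x y) (hx : x ∉ C) :
    HasGradientAt (fun y => infDist y C) ((infDist x C)⁻¹ • (x - p)) x := by
  have hxp : x ≠ p := fun h => hx (h ▸ hp)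
  have hd : infDist x C = ‖x - p‖ := by
    rw [infDist_eq_dist_of_forall_dist_le hp hmin, dist_eq_norm]
  have hvar : ∀ c ∈ C, ⟪x - p, c - p⟫ ≤ 0 := by
    refine (norm_eq_iInf_iff_real_inner_le_zero hC hp).1 ?_
    simp only [← dist_eq_norm, ← infDist_eq_iInf, hd]
  rw [hd]
  refine (hasGradientAt_const_add_inner_sub ‖x - p‖ _ x).of_le_of_le (hasGradientAt_norm_sub hxp)
    (Eventually.of_forall (add_inner_le_infDist_of_inner_le_zero hp hvar))
    (Eventually.of_forall fun y => (infDist_le_dist_of_mem hp).trans_eq (dist_eq_norm y p))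
    (by simp [hd]) (by simp [hd])

theorem hasGradientAt_comp_infDist_of_mem {φ : ℝ → ℝ} {K : NNReal} {C : Set F} {x : F}
    (hφ : ∀ t, |φ t - φ 0| ≤ K * t ^ 2) (hx : x ∈ C) :
    HasGradientAt (fun y => φ (infDist y C)) 0 x := by
  refine hasGradientAt_zero_of_isBigO_sq (IsBigO.of_bound K (Eventually.of_forall fun y => ?_))
  have hy : infDist y C ≤ ‖y - x‖ := (infDist_le_dist_of_mem hx).trans_eq (dist_eq_norm y x)
  simp only [infDist_zero_of_mem hx, Real.norm_eq_abs, norm_pow, abs_norm]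
  calc |φ (infDist y C) - φ 0| ≤ K * infDist y C ^ 2 := hφ _
    _ ≤ K * ‖y - x‖ ^ 2 := by gcongr; exact infDist_nonneg

end InnerProductSpace

theorem stmt_3_general {H : Type*} [NormedAddCommGroup H] [InnerProductSpace ℝ H] [CompleteSpace H]
    (C : Set H) (hCconv : Convex ℝ C)
    (β : ℝ)
    (φ : ℝ → ℝ) (heven : ∀ t, φ (-t) = φ t)
    (φ' : ℝ → ℝ) (hderiv : ∀ t, HasDerivAt φ (φ' t) t)
    (hlip : LipschitzWith (Real.toNNReal β) φ')
    (h : H → ℝ) (hdef : ∀ x, h x = φ (Metric.infDist x C))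
    (projC : H → H)
    (hproj : ∀ x, projC x ∈ C ∧ ∀ y ∈ C, dist x (projC x) ≤ dist x y) :
    ∀ x : H,
      (x ∉ C → HasGradientAt h
        ((φ' (Metric.infDist x C) / Metric.infDist x C) • (x - projC x)) x) ∧
      (x ∈ C → HasGradientAt h 0 x) := by
  have hfun : h = fun y => φ (infDist y C) := funext hdef
  have hφ : ∀ t, |φ t - φ 0| ≤ Real.toNNReal β * t ^ 2 :=
    abs_sub_le_mul_sq_of_lipschitzWith_deriv hderiv hlip ((hderiv 0).eq_zero_of_even_s3 heven)
  intro x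
  refine ⟨fun hx => ?_, fun hx => ?_⟩
  · rw [hfun, div_eq_mul_inv, mul_smul]
    exact (hderiv _).comp_hasGradientAt (hCconv.hasGradientAt_infDist (hproj x).1 (hproj x).2 hx)
  · rw [hfun]
    exact hasGradientAt_comp_infDist_of_mem hφ hx

/-- With `C` nonempty closed convex, `φ : ℝ → ℝ` even convex
differentiable with `β`-Lipschitzian derivative, and `h = φ ∘ d_C`, the gradient of `h`
at `x` is `(φ'(d_C x)/d_C x) • (x − proj_C x)` when `x ∉ C` and `0` when `x ∈ C`. -/
theorem stmt_3 {H : Type*} [NormedAddCommGroup H] [InnerProductSpace ℝ H] [CompleteSpace H]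
    (C : Set H) (hCne : C.Nonempty) (hCclosed : IsClosed C) (hCconv : Convex ℝ C)
    (β : ℝ) (hβ : 0 < β)
    (φ : ℝ → ℝ) (heven : ∀ t, φ (-t) = φ t) (hconv : ConvexOn ℝ Set.univ φ)
    (φ' : ℝ → ℝ) (hderiv : ∀ t, HasDerivAt φ (φ' t) t)
    (hlip : LipschitzWith (Real.toNNReal β) φ')
    (h : H → ℝ) (hdef : ∀ x, h x = φ (Metric.infDist x C))
    (projC : H → H)
    (hproj : ∀ x, projC x ∈ C ∧ ∀ y ∈ C, dist x (projC x) ≤ dist x y) :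
    ∀ x : H,
      (x ∉ C → HasGradientAt h
        ((φ' (Metric.infDist x C) / Metric.infDist x C) • (x - projC x)) x) ∧
      (x ∈ C → HasGradientAt h 0 x) :=
  stmt_3_general C hCconv β φ heven φ' hderiv hlip h hdef projC hproj
end

section
/- Let C be a nonempty closed convex subset of a real Hilbert space H, let β > 0, let φ : ℝ → ℝ be even, convex, and differentiable with a β-Lipschitzian derivative, and set h = φ ∘ d_C. Let γ > 0 and x ∈ H. Then prox_{γh} x = proj_C x + (prox_{γφ} d_C(x) / d_C(x)) (x − proj_C x) if x ∉ C, and prox_{γh} x = x if x ∈ C. -/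
set_option maxHeartbeats 1000000 in
/-- With `C` nonempty closed convex, `φ : ℝ → ℝ` even convex
differentiable with `β`-Lipschitzian derivative, `h = φ ∘ d_C`, `γ > 0` and `x ∈ H`:
`prox_{γh} x = proj_C x + (prox_{γφ}(d_C x)/d_C x) • (x − proj_C x)` if `x ∉ C`, and
`prox_{γh} x = x` if `x ∈ C`.  Here the proximal points are characterized as the
minimizers of the corresponding Moreau problems. -/
theorem stmt_4 {H : Type*} [NormedAddCommGroup H] [InnerProductSpace ℝ H] [CompleteSpace H]
    (C : Set H) (hCne : C.Nonempty) (hCclosed : IsClosed C) (hCconv : Convex ℝ C)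
    (β : ℝ) (hβ : 0 < β)
    (φ : ℝ → ℝ) (heven : ∀ t, φ (-t) = φ t) (hconv : ConvexOn ℝ Set.univ φ)
    (φ' : ℝ → ℝ) (hderiv : ∀ t, HasDerivAt φ (φ' t) t)
    (hlip : LipschitzWith (Real.toNNReal β) φ')
    (h : H → ℝ) (hdef : ∀ x, h x = φ (Metric.infDist x C))
    (projC : H → H)
    (hproj : ∀ x, projC x ∈ C ∧ ∀ y ∈ C, dist x (projC x) ≤ dist x y)
    (γ : ℝ) (hγ : 0 < γ) (x : H)
    -- `q = prox_{γφ}(d_C x)` :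
    (q : ℝ)
    (hq : ∀ t : ℝ, γ * φ q + (Metric.infDist x C - q) ^ 2 / 2
      ≤ γ * φ t + (Metric.infDist x C - t) ^ 2 / 2)
    -- `p = prox_{γh} x` :
    (p : H)
    (hp : ∀ y : H, γ * h p + ‖x - p‖ ^ 2 / 2 ≤ γ * h y + ‖x - y‖ ^ 2 / 2) :
    (x ∉ C → p = projC x + (q / Metric.infDist x C) • (x - projC x)) ∧
    (x ∈ C → p = x) := by
  -- φ attains its minimum at 0
  have hφ0 : ∀ t, φ 0 ≤ φ t := by
    intro t
    have key := hconv.2 (Set.mem_univ t) (Set.mem_univ (-t))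
      (by norm_num : (0:ℝ) ≤ 1/2) (by norm_num : (0:ℝ) ≤ 1/2) (by norm_num)
    have he := heven t
    simp only [smul_eq_mul] at key
    have : (1/2 : ℝ) * t + (1/2 : ℝ) * (-t) = 0 := by ring
    rw [this] at key
    linarith
  -- φ is nondecreasing on [0, ∞)
  have hφmono : ∀ a b : ℝ, 0 ≤ a → a ≤ b → φ a ≤ φ b := by
    intro a b ha hab
    have hb : 0 ≤ b := ha.trans hab
    rcases eq_or_lt_of_le hb with hb0 | hb0
    · have ha0 : a = 0 := le_antisymm (hab.trans hb0.symm.le) ha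
      rw [ha0, ← hb0]
    · set θ : ℝ := (b - a) / (2 * b) with hθ
      have hθ0 : 0 ≤ θ := div_nonneg (by linarith) (by linarith)
      have hθ1 : θ ≤ 1 := by
        rw [hθ, div_le_one (by linarith)]; linarith
      have key := hconv.2 (Set.mem_univ (-b)) (Set.mem_univ b) hθ0
        (by linarith : (0:ℝ) ≤ 1 - θ) (by ring)
      simp only [smul_eq_mul] at key
      have harg : θ * (-b) + (1 - θ) * b = a := by
        rw [hθ]; field_simp; ring
      rw [harg, heven] at key
      nlinarith
  -- distance to projection equals infDist
  have hdistP : ∀ y : H, ‖y - projC y‖ = Metric.infDist y C := by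
    intro y
    refine le_antisymm ?_ ?_
    · rw [← dist_eq_norm]
      by_contra hlt
      push_neg at hlt
      obtain ⟨c, hcC, hc⟩ := (Metric.infDist_lt_iff hCne).1 hlt
      exact absurd ((hproj y).2 c hcC) (not_le.2 hc)
    · rw [← dist_eq_norm]
      exact Metric.infDist_le_dist_of_mem (hproj y).1
  constructor
  · -- main case : x ∉ C
    intro hx
    have hd0' := (IsClosed.notMem_iff_infDist_pos hCclosed hCne).1 hx
    obtain ⟨d, hd⟩ : ∃ d : ℝ, Metric.infDist x C = d := ⟨_, rfl⟩
    rw [hd] at hq hd0' ⊢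
    have hd0 : 0 < d := hd0'
    -- 0 ≤ q
    have hq0 : 0 ≤ q := by
      have key := hq (-q)
      rw [heven] at key
      nlinarith
    -- q ≤ d
    have hqd : q ≤ d := by
      by_contra hqd
      push_neg at hqd
      have key := hq d
      have hφdq : φ d ≤ φ q := hφmono d q (by rw [← hd]; exact Metric.infDist_nonneg) hqd.le
      have : γ * φ d ≤ γ * φ q := mul_le_mul_of_nonneg_left hφdq hγ.le
      nlinarith
    obtain ⟨P, hP⟩ : ∃ P : H, P = projC x := ⟨_, rfl⟩
    obtain ⟨z, hz⟩ : ∃ z : H, z = P + (q / d) • (x - P) := ⟨_, rfl⟩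
    have hPC : P ∈ C := by rw [hP]; exact (hproj x).1
    have hxP : ‖x - P‖ = d := by rw [hP, hdistP x, hd]
    have hzP : z - P = (q / d) • (x - P) := by rw [hz]; abel
    have hnzP : ‖z - P‖ = q := by
      rw [hzP, norm_smul, Real.norm_eq_abs, abs_of_nonneg (div_nonneg hq0 hd0.le), hxP]
      field_simp
    have hxz : x - z = (1 - q / d) • (x - P) := by
      rw [hz, sub_smul, one_smul]
      abel
    have hnxz : ‖x - z‖ = d - q := by
      rw [hxz, norm_smul, Real.norm_eq_abs, hxP]
      have h1 : (0:ℝ) ≤ 1 - q / d := by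
        rw [sub_nonneg, div_le_one hd0]; exact hqd
      rw [abs_of_nonneg h1]
      field_simp
    -- infDist z C = q
    have hdz : Metric.infDist z C = q := by
      refine le_antisymm ?_ ?_
      · calc Metric.infDist z C ≤ dist z P := Metric.infDist_le_dist_of_mem hPC
          _ = q := by rw [dist_eq_norm, hnzP]
      · have := Metric.infDist_le_infDist_add_dist (x := x) (y := z) (s := C)
        rw [dist_eq_norm, hnxz, hd] at this
        linarith
    -- z achieves the minimal value everywhere
    have hmain : ∀ y : H, γ * h z + ‖x - z‖ ^ 2 / 2 ≤ γ * h y + ‖x - y‖ ^ 2 / 2 := by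
      intro y
      rw [hdef z, hdef y, hdz, hnxz]
      have hle1 : d ≤ Metric.infDist y C + ‖x - y‖ := by
        have := Metric.infDist_le_infDist_add_dist (x := x) (y := y) (s := C)
        rw [dist_eq_norm, hd] at this; exact this
      have hle2 : Metric.infDist y C ≤ d + ‖x - y‖ := by
        have := Metric.infDist_le_infDist_add_dist (x := y) (y := x) (s := C)
        rw [dist_eq_norm, norm_sub_rev, hd] at this; exact this
      have hsq : (d - Metric.infDist y C) ^ 2 ≤ ‖x - y‖ ^ 2 := by
        have hn : (0:ℝ) ≤ ‖x - y‖ := norm_nonneg _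
        nlinarith
      have := hq (Metric.infDist y C)
      linarith
    -- p = z by strict convexity (midpoint argument)
    have hfpz := hp z
    have hfzp := hmain p
    obtain ⟨m, hm⟩ : ∃ m : H, m = (1/2 : ℝ) • (p + z) := ⟨_, rfl⟩
    -- h m ≤ (h p + h z)/2
    have hhm : h m ≤ (h p + h z) / 2 := by
      obtain ⟨w, hw⟩ : ∃ w : H, w = (1/2 : ℝ) • projC p + (1/2 : ℝ) • projC z := ⟨_, rfl⟩
      have hwC : w ∈ C := hw ▸ hCconv (hproj p).1 (hproj z).1 (by norm_num) (by norm_num) (by norm_num)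
      have hmw : Metric.infDist m C ≤ (Metric.infDist p C + Metric.infDist z C) / 2 := by
        calc Metric.infDist m C ≤ dist m w := Metric.infDist_le_dist_of_mem hwC
          _ = ‖(1/2 : ℝ) • (p - projC p) + (1/2 : ℝ) • (z - projC z)‖ := by
              rw [dist_eq_norm]; congr 1
              rw [hm, hw, smul_add, smul_sub, smul_sub]; abel
          _ ≤ ‖(1/2 : ℝ) • (p - projC p)‖ + ‖(1/2 : ℝ) • (z - projC z)‖ := norm_add_le _ _
          _ = (Metric.infDist p C + Metric.infDist z C) / 2 := by
              simp only [norm_smul, Real.norm_eq_abs, hdistP p, hdistP z,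
                abs_of_nonneg (by norm_num : (0:ℝ) ≤ 1/2)]
              ring
      have h1 : φ (Metric.infDist m C) ≤ φ ((Metric.infDist p C + Metric.infDist z C) / 2) :=
        hφmono _ _ Metric.infDist_nonneg hmw
      have h2 := hconv.2 (Set.mem_univ (Metric.infDist p C)) (Set.mem_univ (Metric.infDist z C))
        (by norm_num : (0:ℝ) ≤ 1/2) (by norm_num : (0:ℝ) ≤ 1/2) (by norm_num)
      simp only [smul_eq_mul] at h2
      have harg : (1/2:ℝ) * Metric.infDist p C + (1/2:ℝ) * Metric.infDist z C
          = (Metric.infDist p C + Metric.infDist z C) / 2 := by ring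
      rw [harg] at h2
      rw [hdef m, hdef p, hdef z]
      linarith
    -- parallelogram identity
    have hpar : 4 * ‖x - m‖ ^ 2 + ‖z - p‖ ^ 2 = 2 * ‖x - p‖ ^ 2 + 2 * ‖x - z‖ ^ 2 := by
      have key := parallelogram_law_with_norm ℝ (x - p) (x - z)
      have e1 : (x - p) + (x - z) = (2:ℝ) • (x - m) := by
        rw [hm, smul_sub, smul_smul]
        norm_num
        rw [two_smul]
        abel
      have e2 : (x - p) - (x - z) = z - p := by abel
      rw [e1, e2, norm_smul] at key
      simp only [Real.norm_ofNat] at key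
      nlinarith [key]
    have hfpm := hp m
    have hzp0 : ‖z - p‖ ^ 2 ≤ 0 := by
      have hγhm : γ * h m ≤ γ * ((h p + h z) / 2) := mul_le_mul_of_nonneg_left hhm hγ.le
      linarith
    have hzeq : ‖z - p‖ = 0 := by
      have hnn : (0:ℝ) ≤ ‖z - p‖ := norm_nonneg _
      nlinarith
    have hpz : p = z := (sub_eq_zero.1 (norm_eq_zero.1 hzeq)).symm
    rw [hpz, hz, hP]
  · -- trivial case : x ∈ C
    intro hx
    have hd0 : Metric.infDist x C = 0 := Metric.infDist_zero_of_mem hx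
    have key := hp x
    rw [hdef p, hdef x, hd0, sub_self, norm_zero] at key
    have h1 : γ * φ 0 ≤ γ * φ (Metric.infDist p C) :=
      mul_le_mul_of_nonneg_left (hφ0 _) hγ.le
    have h2 : ‖x - p‖ ^ 2 ≤ 0 := by nlinarith
    have : ‖x - p‖ = 0 := by nlinarith [norm_nonneg (x - p)]
    have := norm_eq_zero.1 this
    have := sub_eq_zero.1 this
    exact this.symm
end

section
/- Let C be a nonempty closed convex subset of a real Hilbert space H, let ε > 0, let β > 0, let ψ : ℝ → ℝ be even, convex, and differentiable with a β-Lipschitzian derivative, and set h = ψ ∘ max(d_C − ε, 0). Let γ > 0 and x ∈ H. Then prox_{γh} x = proj_C x + ((ε + prox_{γψ}(d_C(x) − ε))/d_C(x)) (x − proj_C x) if d_C(x) > ε, and prox_{γh} x = x if d_C(x) ≤ ε. -/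
/-!
Write `d = d_C`. Since `ψ` is even and convex it is nondecreasing on `[0, ∞)`, and `d` is
convex, so `h` is convex and the prox objective `γ h + ‖x − ·‖² / 2` is strictly convex: it
has at most one minimizer, and it suffices to exhibit one. If `d x ≤ ε`, then `x` itself
minimizes, as `h x = ψ 0 = min ψ`. If `d x > ε`, the objective at `y` is at least
`γ ψ s + (d x − ε − s)² / 2` with `s = max (d y − ε) 0`, hence at least its value at
`q = prox_{γψ}(d x − ε) ∈ [0, d x − ε]`, and this value is attained at the point of the
segment `[proj_C x, x]` at distance `ε + q` from `C`.
-/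

open Metric Set

namespace ConvexOn

variable {ψ : ℝ → ℝ}

lemma le_of_abs_le_of_even (hψ : ConvexOn ℝ univ ψ) (heven : Function.Even ψ) {s t : ℝ}
    (hst : |s| ≤ |t|) : ψ s ≤ ψ t := by
  have habs : ψ |t| = ψ t := by
    rcases abs_choice t with h | h <;> rw [h]
    exact heven t
  have hseg : s ∈ segment ℝ (-|t|) |t| := by
    rw [segment_eq_Icc (by linarith [abs_nonneg t])]
    exact abs_le.mp hst
  calc ψ s ≤ max (ψ (-|t|)) (ψ |t|) := hψ.le_on_segment (mem_univ _) (mem_univ _) hseg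
    _ = ψ t := by rw [heven, max_self, habs]

lemma monotoneOn_Ici_of_even (hψ : ConvexOn ℝ univ ψ) (heven : Function.Even ψ) :
    MonotoneOn ψ (Ici 0) := fun s hs t _ hst =>
  hψ.le_of_abs_le_of_even heven <| by
    rwa [abs_of_nonneg hs, abs_of_nonneg (le_trans (mem_Ici.mp hs) hst)]

lemma prox_mem_Icc_of_even (hψ : ConvexOn ℝ univ ψ) (heven : Function.Even ψ) {γ a q : ℝ}
    (hγ : 0 ≤ γ) (ha : 0 ≤ a)
    (hq : ∀ t, γ * ψ q + (a - q) ^ 2 / 2 ≤ γ * ψ t + (a - t) ^ 2 / 2) : q ∈ Icc 0 a := by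
  constructor
  · by_contra! hq0
    have hψq : ψ 0 ≤ ψ q := hψ.le_of_abs_le_of_even heven (by simp)
    nlinarith [hq 0, mul_le_mul_of_nonneg_left hψq hγ]
  · by_contra! haq
    have hψq : ψ a ≤ ψ q := hψ.le_of_abs_le_of_even heven <| by
      rw [abs_of_nonneg ha, abs_of_pos (ha.trans_lt haq)]; exact haq.le
    nlinarith [hq a, mul_le_mul_of_nonneg_left hψq hγ]

lemma comp_of_mapsTo {E : Type*} [AddCommGroup E] [Module ℝ E] {s : Set E} {t : Set ℝ}
    {g : E → ℝ} (hψ : ConvexOn ℝ t ψ) (hmono : MonotoneOn ψ t) (hg : ConvexOn ℝ s g)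
    (hst : MapsTo g s t) : ConvexOn ℝ s (ψ ∘ g) :=
  ⟨hg.1, fun _ hu _ hv _ _ ha hb hab =>
    (hmono (hst (hg.1 hu hv ha hb hab)) (hψ.1 (hst hu) (hst hv) ha hb hab)
      (hg.2 hu hv ha hb hab)).trans (hψ.2 (hst hu) (hst hv) ha hb hab)⟩

lemma strictConvexOn_add_half_sq_dist {F : Type*} [NormedAddCommGroup F]
    [InnerProductSpace ℝ F] {f : F → ℝ} (hf : ConvexOn ℝ univ f) (x : F) :
    StrictConvexOn ℝ univ (fun y => f y + ‖x - y‖ ^ 2 / 2) := by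
  refine StrongConvexOn.strictConvexOn (m := 1) ?_ one_pos
  rw [strongConvexOn_iff_convex]
  have hsplit : (fun y => f y + ‖x - y‖ ^ 2 / 2 - 1 / 2 * ‖y‖ ^ 2)
      = fun y => f y + (‖x‖ ^ 2 / 2 + (-innerₛₗ ℝ x) y) := by
    ext y; rw [norm_sub_sq_real, LinearMap.neg_apply, innerₛₗ_apply_apply]; ring
  rw [hsplit]
  exact hf.add ((convexOn_const _ convex_univ).add ((-innerₛₗ ℝ x).convexOn convex_univ))

end ConvexOn

namespace Metric

lemma infDist_eq_dist_of_forall_dist_le_s6 {α : Type*} [PseudoMetricSpace α] {C : Set α}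
    {x P : α} (hP : P ∈ C) (hmin : ∀ y ∈ C, dist x P ≤ dist x y) : infDist x C = dist x P :=
  le_antisymm (infDist_le_dist_of_mem hP) ((le_infDist ⟨P, hP⟩).2 hmin)

lemma sq_sub_max_infDist_sub_le {E : Type*} [SeminormedAddCommGroup E] {C : Set E} {ε : ℝ}
    {x : E} (hlt : ε < infDist x C) (y : E) :
    (infDist x C - ε - max (infDist y C - ε) 0) ^ 2 ≤ ‖x - y‖ ^ 2 := by
  rw [sq_le_sq, abs_norm, ← dist_eq_norm]
  calc |infDist x C - ε - max (infDist y C - ε) 0|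
      = |max (infDist x C - ε) 0 - max (infDist y C - ε) 0| := by
        rw [max_eq_left (sub_nonneg.2 hlt.le)]
    _ ≤ |(infDist x C - ε) - (infDist y C - ε)| := abs_max_sub_max_le_abs _ _ _
    _ = dist (infDist x C) (infDist y C) := by rw [Real.dist_eq]; ring_nf
    _ ≤ dist x y := by simpa using (lipschitz_infDist_pt C).dist_le_mul x y

variable {E : Type*} [NormedAddCommGroup E] [NormedSpace ℝ E] {C : Set E}

lemma convexOn_infDist (hC : Convex ℝ C) : ConvexOn ℝ univ (infDist · C) := by
  refine ⟨convex_univ, fun u _ v _ a b ha hb hab => ?_⟩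
  rcases C.eq_empty_or_nonempty with rfl | hCne
  · simp
  refine le_of_forall_pos_le_add fun δ hδ => ?_
  obtain ⟨cu, hcu, hu⟩ := (infDist_lt_iff hCne).1 (lt_add_of_pos_right (infDist u C) hδ)
  obtain ⟨cv, hcv, hv⟩ := (infDist_lt_iff hCne).1 (lt_add_of_pos_right (infDist v C) hδ)
  calc infDist (a • u + b • v) C ≤ dist (a • u + b • v) (a • cu + b • cv) :=
        infDist_le_dist_of_mem (hC hcu hcv ha hb hab)
    _ ≤ a * dist u cu + b * dist v cv := by
        rw [dist_eq_norm, dist_eq_norm, dist_eq_norm,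
          show a • u + b • v - (a • cu + b • cv) = a • (u - cu) + b • (v - cv) by module]
        refine (norm_add_le _ _).trans ?_
        rw [norm_smul, norm_smul, Real.norm_of_nonneg ha, Real.norm_of_nonneg hb]
    _ ≤ a * (infDist u C + δ) + b * (infDist v C + δ) := by gcongr
    _ = a • infDist u C + b • infDist v C + δ := by
        rw [smul_eq_mul, smul_eq_mul]; linear_combination δ * hab

lemma infDist_lineMap_of_nearest {x P : E} (hP : P ∈ C) (hxP : infDist x C = dist x P)
    {t : ℝ} (ht : t ∈ Icc 0 1) : infDist (AffineMap.lineMap P x t) C = t * infDist x C := by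
  have hleft : dist (AffineMap.lineMap P x t) P = t * dist x P := by
    rw [dist_lineMap_left, Real.norm_of_nonneg ht.1, dist_comm]
  have hright : dist x (AffineMap.lineMap P x t) = (1 - t) * dist x P := by
    rw [dist_comm, dist_lineMap_right, Real.norm_of_nonneg (sub_nonneg.2 ht.2), dist_comm]
  refine le_antisymm ((infDist_le_dist_of_mem hP).trans_eq (by rw [hleft, hxP])) ?_
  have := infDist_le_infDist_add_dist (x := x) (y := AffineMap.lineMap P x t) (s := C)
  rw [hright] at this
  rw [hxP] at this ⊢
  linarith

end Metric

/- Both terms of the objective are bounded below through the 1-Lipschitz map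
`y ↦ max (d_C y − ε) 0`, and both bounds are attained on the segment `[P, x]`. -/
lemma prox_objective_lineMap_le {E : Type*} [NormedAddCommGroup E] [NormedSpace ℝ E]
    {C : Set E} {ψ : ℝ → ℝ} (heven : Function.Even ψ) (hψ : ConvexOn ℝ univ ψ) {ε γ q : ℝ}
    (hε : 0 < ε) (hγ : 0 ≤ γ) {x P : E} (hP : P ∈ C) (hxP : infDist x C = dist x P)
    (hlt : ε < infDist x C)
    (hq : ∀ t, γ * ψ q + (infDist x C - ε - q) ^ 2 / 2
      ≤ γ * ψ t + (infDist x C - ε - t) ^ 2 / 2)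
    (y : E) :
    γ * ψ (max (infDist (AffineMap.lineMap P x ((ε + q) / infDist x C)) C - ε) 0)
        + ‖x - AffineMap.lineMap P x ((ε + q) / infDist x C)‖ ^ 2 / 2
      ≤ γ * ψ (max (infDist y C - ε) 0) + ‖x - y‖ ^ 2 / 2 := by
  set d := infDist x C with hd_def
  obtain ⟨hq0, hqd⟩ := hψ.prox_mem_Icc_of_even heven hγ (sub_nonneg.2 hlt.le) hq
  have hd : 0 < d := hε.trans hlt
  have ht : (ε + q) / d ∈ Icc 0 1 :=
    ⟨div_nonneg (by linarith) hd.le, (div_le_one hd).2 (by linarith)⟩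
  have hz : infDist (AffineMap.lineMap P x ((ε + q) / d)) C = ε + q := by
    rw [infDist_lineMap_of_nearest hP hxP ht, ← hd_def]; field_simp
  have hxz : ‖x - AffineMap.lineMap P x ((ε + q) / d)‖ = d - ε - q := by
    rw [← dist_eq_norm, dist_comm, dist_lineMap_right, Real.norm_of_nonneg (sub_nonneg.2 ht.2),
      dist_comm, ← hxP]
    field_simp
    ring
  calc _ = γ * ψ q + (d - ε - q) ^ 2 / 2 := by
        rw [hz, hxz, add_sub_cancel_left, max_eq_left hq0]
    _ ≤ γ * ψ (max (infDist y C - ε) 0) + (d - ε - max (infDist y C - ε) 0) ^ 2 / 2 := hq _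
    _ ≤ _ := by linarith [sq_sub_max_infDist_sub_le hlt y]

theorem stmt_6_general {H : Type*} [NormedAddCommGroup H] [InnerProductSpace ℝ H]
    (C : Set H) (hCconv : Convex ℝ C)
    (ε : ℝ) (hε : 0 < ε)
    (ψ : ℝ → ℝ) (heven : ∀ t, ψ (-t) = ψ t) (hconv : ConvexOn ℝ Set.univ ψ)
    (h : H → ℝ) (hdef : ∀ x, h x = ψ (max (Metric.infDist x C - ε) 0))
    (projC : H → H)
    (hproj : ∀ x, projC x ∈ C ∧ ∀ y ∈ C, dist x (projC x) ≤ dist x y)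
    (γ : ℝ) (hγ : 0 < γ) (x : H)
    -- `q = prox_{γψ}(d_C x − ε)` :
    (q : ℝ)
    (hq : ∀ t : ℝ, γ * ψ q + ((Metric.infDist x C - ε) - q) ^ 2 / 2
      ≤ γ * ψ t + ((Metric.infDist x C - ε) - t) ^ 2 / 2)
    -- `p = prox_{γh} x` :
    (p : H)
    (hp : ∀ y : H, γ * h p + ‖x - p‖ ^ 2 / 2 ≤ γ * h y + ‖x - y‖ ^ 2 / 2) :
    (ε < Metric.infDist x C →
      p = projC x + ((ε + q) / Metric.infDist x C) • (x - projC x)) ∧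
    (Metric.infDist x C ≤ ε → p = x) := by
  obtain ⟨hPC, hPmin⟩ := hproj x
  have hxP := infDist_eq_dist_of_forall_dist_le_s6 hPC hPmin
  have hh : ConvexOn ℝ univ h := by
    rw [show h = ψ ∘ fun y => max (infDist y C - ε) 0 from funext hdef]
    exact (hconv.subset (subset_univ _) (convex_Ici 0)).comp_of_mapsTo
      (hconv.monotoneOn_Ici_of_even heven)
      (((convexOn_infDist hCconv).sub (concaveOn_const ε convex_univ)).sup
        (convexOn_const 0 convex_univ))
      fun _ _ => mem_Ici.2 (le_max_right _ _)
  have eq_of_isMin : ∀ z, (∀ y, γ * h z + ‖x - z‖ ^ 2 / 2 ≤ γ * h y + ‖x - y‖ ^ 2 / 2) →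
      p = z := fun z hz =>
    ((hh.smul hγ.le).strictConvexOn_add_half_sq_dist x).eq_of_isMinOn
      (isMinOn_univ_iff.2 hp) (isMinOn_univ_iff.2 hz) trivial trivial
  refine ⟨fun hlt => eq_of_isMin _ fun y => ?_, fun hle => eq_of_isMin x fun y => ?_⟩
  · rw [add_comm (projC x), ← AffineMap.lineMap_apply_module', hdef, hdef]
    exact prox_objective_lineMap_le heven hconv hε hγ.le hPC hxP hlt hq y
  · rw [hdef, hdef, max_eq_right (sub_nonpos.2 hle), sub_self, norm_zero]
    have := hconv.le_of_abs_le_of_even heven (s := 0) (t := max (infDist y C - ε) 0) (by simp)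
    nlinarith [sq_nonneg ‖x - y‖]

/-- With `C` nonempty closed convex, `ε > 0`, `ψ : ℝ → ℝ` even convex
differentiable with `β`-Lipschitzian derivative, `h = ψ ∘ max(d_C − ε, 0)`, `γ > 0` and
`x ∈ H`:  `prox_{γh} x = proj_C x + ((ε + prox_{γψ}(d_C x − ε))/d_C x) • (x − proj_C x)`
if `d_C x > ε`, and `prox_{γh} x = x` if `d_C x ≤ ε`. -/
theorem stmt_6 {H : Type*} [NormedAddCommGroup H] [InnerProductSpace ℝ H] [CompleteSpace H]
    (C : Set H) (hCne : C.Nonempty) (hCclosed : IsClosed C) (hCconv : Convex ℝ C)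
    (ε : ℝ) (hε : 0 < ε) (β : ℝ) (hβ : 0 < β)
    (ψ : ℝ → ℝ) (heven : ∀ t, ψ (-t) = ψ t) (hconv : ConvexOn ℝ Set.univ ψ)
    (ψ' : ℝ → ℝ) (hderiv : ∀ t, HasDerivAt ψ (ψ' t) t)
    (hlip : LipschitzWith (Real.toNNReal β) ψ')
    (h : H → ℝ) (hdef : ∀ x, h x = ψ (max (Metric.infDist x C - ε) 0))
    (projC : H → H)
    (hproj : ∀ x, projC x ∈ C ∧ ∀ y ∈ C, dist x (projC x) ≤ dist x y)
    (γ : ℝ) (hγ : 0 < γ) (x : H)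
    -- `q = prox_{γψ}(d_C x − ε)` :
    (q : ℝ)
    (hq : ∀ t : ℝ, γ * ψ q + ((Metric.infDist x C - ε) - q) ^ 2 / 2
      ≤ γ * ψ t + ((Metric.infDist x C - ε) - t) ^ 2 / 2)
    -- `p = prox_{γh} x` :
    (p : H)
    (hp : ∀ y : H, γ * h p + ‖x - p‖ ^ 2 / 2 ≤ γ * h y + ‖x - y‖ ^ 2 / 2) :
    (ε < Metric.infDist x C →
      p = projC x + ((ε + q) / Metric.infDist x C) • (x - projC x)) ∧
    (Metric.infDist x C ≤ ε → p = x) :=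
  stmt_6_general C hCconv ε hε ψ heven hconv h hdef projC hproj γ hγ x q hq p hp
end

section
/- Let ε > 0, let β > 0, let ψ : ℝ → ℝ be even, convex, and differentiable with a β-Lipschitzian derivative, and define the smoothed Vapnik loss φ : ℝ → ℝ by φ(ξ) = ψ(max(|ξ| − ε, 0)). Then φ is convex and differentiable with a β-Lipschitzian derivative, φ'(ξ) = ψ'(|ξ| − ε) sign(ξ) if |ξ| > ε and φ'(ξ) = 0 if |ξ| ≤ ε, and for every γ > 0 and every ξ ∈ ℝ, prox_{γφ} ξ = (ε + prox_{γψ}(|ξ| − ε)) sign(ξ) if |ξ| > ε, while prox_{γφ} ξ = ξ if |ξ| ≤ ε. -/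
/-!
With `S` the soft-thresholding operator, `φ = ψ ∘ S` because `ψ` is even and
`|S ξ| = max (|ξ| - ε) 0`. The chain rule gives `φ' = ψ' ∘ S`, also at the kinks `ξ = ±ε`
since there `ψ'(S ξ) = ψ'(0) = 0` and `S` is `1`-Lipschitz. As `ψ'` is monotone and
`β`-Lipschitz and `S` is monotone and `1`-Lipschitz, `φ'` is monotone (so `φ` is convex) and
`β`-Lipschitz. For `|ξ| > ε`, the point `(ε + q) sign ξ` has the optimal value of the
`ψ`-problem at `|ξ| - ε`, which bounds the `φ`-objective from below because `|S|` is also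
`1`-Lipschitz. Prox objectives of convex functions are strictly convex, so minimizers are unique.
-/

open Set Filter Asymptotics Topology

theorem Function.Even.deriv {f : ℝ → ℝ} (hf : f.Even) : (deriv f).Odd := fun t => by
  simpa [hf _] using deriv_comp_neg (f := f) (x := -t)

theorem Function.Odd.map_mul_sign {g : ℝ → ℝ} (hg : g.Odd) (a x : ℝ) :
    g (a * Real.sign x) = g a * Real.sign x := by
  rcases Real.sign_apply_eq x with h | h | h <;> simp [h, hg a, hg.map_zero]

theorem Function.Even.apply_abs {f : ℝ → ℝ} (hf : f.Even) (x : ℝ) : f |x| = f x := by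
  rcases abs_choice x with h | h <;> simp [h, hf x]

theorem Function.Even.apply_zero_le {E : Type*} [AddCommGroup E] [Module ℝ E] {f : E → ℝ}
    (hf : f.Even) (hc : ConvexOn ℝ univ f) (x : E) : f 0 ≤ f x := by
  have := hc.2 (mem_univ x) (mem_univ (-x)) (by norm_num : (0:ℝ) ≤ 1/2)
    (by norm_num : (0:ℝ) ≤ 1/2) (by norm_num)
  rw [← smul_add, add_neg_cancel, smul_zero, hf x, ← add_smul] at this
  norm_num at this
  exact this

theorem HasDerivAt.comp_lipschitzWith_of_deriv_zero {f g : ℝ → ℝ} {K : NNReal} {x : ℝ}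
    (hf : HasDerivAt f 0 (g x)) (hg : LipschitzWith K g) : HasDerivAt (f ∘ g) 0 x := by
  rw [hasDerivAt_iff_isLittleO] at hf ⊢
  have hgx : (fun t => g t - g x) =O[𝓝 x] fun t => t - x :=
    IsBigO.of_bound K (Eventually.of_forall fun t => by
      simpa [← Real.dist_eq] using hg.dist_le_mul t x)
  simpa [Function.comp_def] using (hf.comp_tendsto (hg.continuous.tendsto x)).trans_isBigO hgx

/-- Soft thresholding `prox_{ε|·|}`: `x` minus its projection onto `[-ε, ε]`. -/
def softThreshold (ε x : ℝ) : ℝ := x - max (-ε) (min x ε)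

section softThreshold

variable {ε x y : ℝ}

theorem softThreshold_sub_mem_Icc (h : x ≤ y) :
    softThreshold ε y - softThreshold ε x ∈ Icc 0 (y - x) := by
  unfold softThreshold
  constructor <;> grind

theorem monotone_softThreshold : Monotone (softThreshold ε) := fun _ _ h =>
  sub_nonneg.1 (softThreshold_sub_mem_Icc h).1

theorem abs_softThreshold_sub_le (x y : ℝ) :
    |softThreshold ε x - softThreshold ε y| ≤ |x - y| := by
  rcases le_total x y with h | h
  · rw [abs_sub_comm, abs_sub_comm x, abs_of_nonneg (softThreshold_sub_mem_Icc h).1,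
      abs_of_nonneg (sub_nonneg.2 h)]
    exact (softThreshold_sub_mem_Icc h).2
  · rw [abs_of_nonneg (softThreshold_sub_mem_Icc h).1, abs_of_nonneg (sub_nonneg.2 h)]
    exact (softThreshold_sub_mem_Icc h).2

theorem lipschitzWith_softThreshold : LipschitzWith 1 (softThreshold ε) :=
  LipschitzWith.of_dist_le_mul fun x y => by
    simpa [Real.dist_eq] using abs_softThreshold_sub_le x y

theorem softThreshold_of_abs_le (h : |x| ≤ ε) : softThreshold ε x = 0 := by
  rw [abs_le] at h
  simp [softThreshold, h.1, h.2]

theorem softThreshold_of_lt (hε : 0 ≤ ε) (h : ε < x) : softThreshold ε x = x - ε := by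
  simp [softThreshold, h.le, show -ε ≤ ε by linarith]

theorem softThreshold_of_lt_neg (hε : 0 ≤ ε) (h : x < -ε) : softThreshold ε x = x + ε := by
  simp [softThreshold, show x ≤ ε by linarith, h.le]

theorem softThreshold_eq_mul_sign (hε : 0 ≤ ε) (h : ε < |x|) :
    softThreshold ε x = (|x| - ε) * Real.sign x := by
  rcases lt_abs.1 h with h | h
  · rw [softThreshold_of_lt hε h, abs_of_pos (by linarith), Real.sign_of_pos (by linarith),
      mul_one]
  · rw [softThreshold_of_lt_neg hε (by linarith), abs_of_neg (by linarith),
      Real.sign_of_neg (by linarith)]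
    ring

theorem abs_softThreshold (hε : 0 ≤ ε) (x : ℝ) : |softThreshold ε x| = max (|x| - ε) 0 := by
  rcases le_or_gt |x| ε with h | h
  · rw [softThreshold_of_abs_le h, abs_zero, max_eq_right (by linarith)]
  · rw [max_eq_left (by linarith)]
    rcases lt_abs.1 h with h | h
    · rw [softThreshold_of_lt hε h, abs_of_pos (by linarith), abs_of_pos (by linarith)]
    · rw [softThreshold_of_lt_neg hε (by linarith), abs_of_neg (by linarith),
        abs_of_neg (by linarith)]
      ring

theorem hasDerivAt_softThreshold (hε : 0 ≤ ε) (h : ε < |x|) :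
    HasDerivAt (softThreshold ε) 1 x := by
  rcases lt_abs.1 h with h | h
  · refine ((hasDerivAt_id x).sub_const ε).congr_of_eventuallyEq ?_
    filter_upwards [Ioi_mem_nhds h] with t ht using softThreshold_of_lt hε ht
  · refine ((hasDerivAt_id x).add_const ε).congr_of_eventuallyEq ?_
    filter_upwards [Iio_mem_nhds (show x < -ε by linarith)] with t ht
    exact softThreshold_of_lt_neg hε ht

theorem hasDerivAt_comp_softThreshold {ψ ψ' : ℝ → ℝ} (hψ : ∀ t, HasDerivAt ψ (ψ' t) t)
    (hψ'0 : ψ' 0 = 0) (hε : 0 ≤ ε) (x : ℝ) :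
    HasDerivAt (ψ ∘ softThreshold ε) (ψ' (softThreshold ε x)) x := by
  rcases le_or_gt |x| ε with h | h
  · rw [softThreshold_of_abs_le h, hψ'0]
    refine HasDerivAt.comp_lipschitzWith_of_deriv_zero ?_ lipschitzWith_softThreshold
    simpa [softThreshold_of_abs_le h, hψ'0] using hψ 0
  · simpa using (hψ _).comp x (hasDerivAt_softThreshold hε h)

end softThreshold

/-- `IsProxPoint f γ x p` says that `p = prox_{γf} x`. -/
def IsProxPoint (f : ℝ → ℝ) (γ x p : ℝ) : Prop :=
  ∀ t, γ * f p + (x - p) ^ 2 / 2 ≤ γ * f t + (x - t) ^ 2 / 2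

section IsProxPoint

variable {f : ℝ → ℝ} {γ x p : ℝ}

theorem IsProxPoint.eq {p' : ℝ} (hp : IsProxPoint f γ x p) (hf : ConvexOn ℝ univ f)
    (hγ : 0 ≤ γ) (hp' : IsProxPoint f γ x p') : p = p' := by
  have hmid := hf.2 (mem_univ p) (mem_univ p') (by norm_num : (0:ℝ) ≤ 1/2)
    (by norm_num : (0:ℝ) ≤ 1/2) (by norm_num)
  simp only [smul_eq_mul] at hmid
  have hsq : (p - p') ^ 2 ≤ 0 := by
    nlinarith [hp (1/2 * p + 1/2 * p'), hp' p, mul_le_mul_of_nonneg_left hmid hγ]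
  nlinarith [sq_nonneg (p - p')]

theorem isProxPoint_self (hγ : 0 ≤ γ) (hx : ∀ t, f x ≤ f t) : IsProxPoint f γ x x :=
  fun t => by nlinarith [mul_le_mul_of_nonneg_left (hx t) hγ, sq_nonneg (x - t)]

theorem IsProxPoint.nonneg_of_even (hp : IsProxPoint f γ x p) (hf : f.Even) (hx : 0 < x) :
    0 ≤ p := by
  have := hp (-p)
  rw [hf] at this
  nlinarith

end IsProxPoint

theorem IsProxPoint.comp_softThreshold {ψ : ℝ → ℝ} {γ ε ξ q : ℝ}
    (hq : IsProxPoint ψ γ (|ξ| - ε) q) (hψ : ψ.Even) (hε : 0 ≤ ε) (h : ε < |ξ|) :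
    IsProxPoint (ψ ∘ softThreshold ε) γ ξ ((ε + q) * Real.sign ξ) := by
  have hq0 : 0 ≤ q := hq.nonneg_of_even hψ (by linarith)
  obtain ⟨hp_abs, hp_sq⟩ : |(ε + q) * Real.sign ξ| = ε + q ∧
      (ξ - (ε + q) * Real.sign ξ) ^ 2 = (|ξ| - ε - q) ^ 2 := by
    rcases lt_abs.1 h with h' | h'
    · rw [Real.sign_of_pos (by linarith), abs_of_pos (show 0 < ξ by linarith), mul_one,
        abs_of_nonneg (by linarith)]
      exact ⟨rfl, by ring⟩
    · rw [Real.sign_of_neg (by linarith), abs_of_neg (show ξ < 0 by linarith), mul_neg_one,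
        abs_neg, abs_of_nonneg (by linarith)]
      exact ⟨rfl, by ring⟩
  have hSp : ψ (softThreshold ε ((ε + q) * Real.sign ξ)) = ψ q := by
    rw [← hψ.apply_abs, abs_softThreshold hε, hp_abs, add_sub_cancel_left, max_eq_left hq0]
  intro t
  have hSξ : |softThreshold ε ξ| = |ξ| - ε := by
    rw [abs_softThreshold hε, max_eq_left (by linarith)]
  have hdist : (|ξ| - ε - |softThreshold ε t|) ^ 2 ≤ (ξ - t) ^ 2 := by
    rw [← hSξ]
    exact sq_le_sq.2 ((abs_abs_sub_abs_le_abs_sub _ _).trans (abs_softThreshold_sub_le ξ t))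
  simp only [Function.comp_apply]
  rw [hSp, hp_sq, ← hψ.apply_abs (softThreshold ε t)]
  linarith [hq |softThreshold ε t|]

theorem stmt_7_general (ε : ℝ) (hε : 0 < ε) (β : ℝ)
    (ψ : ℝ → ℝ) (heven : ∀ t, ψ (-t) = ψ t) (hconv : ConvexOn ℝ Set.univ ψ)
    (ψ' : ℝ → ℝ) (hderiv : ∀ t, HasDerivAt ψ (ψ' t) t)
    (hlip : LipschitzWith (Real.toNNReal β) ψ')
    (φ : ℝ → ℝ) (hdef : ∀ ξ, φ ξ = ψ (max (|ξ| - ε) 0)) :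
    ConvexOn ℝ Set.univ φ ∧
    (∀ ξ, DifferentiableAt ℝ φ ξ) ∧
    LipschitzWith (Real.toNNReal β) (deriv φ) ∧
    (∀ ξ : ℝ,
      (ε < |ξ| → HasDerivAt φ (ψ' (|ξ| - ε) * Real.sign ξ) ξ) ∧
      (|ξ| ≤ ε → HasDerivAt φ 0 ξ)) ∧
    (∀ γ : ℝ, 0 < γ → ∀ ξ q p : ℝ,
      -- `q = prox_{γψ}(|ξ| − ε)` :
      (∀ t : ℝ, γ * ψ q + ((|ξ| - ε) - q) ^ 2 / 2 ≤ γ * ψ t + ((|ξ| - ε) - t) ^ 2 / 2) →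
      -- `p = prox_{γφ} ξ` :
      (∀ t : ℝ, γ * φ p + (ξ - p) ^ 2 / 2 ≤ γ * φ t + (ξ - t) ^ 2 / 2) →
      (ε < |ξ| → p = (ε + q) * Real.sign ξ) ∧ (|ξ| ≤ ε → p = ξ)) := by
  replace heven : ψ.Even := heven
  obtain rfl : φ = ψ ∘ softThreshold ε := funext fun ξ => by
    rw [hdef, Function.comp_apply, ← abs_softThreshold hε.le, heven.apply_abs]
  have hψ' : deriv ψ = ψ' := funext fun t => (hderiv t).deriv
  have hodd : ψ'.Odd := hψ' ▸ heven.deriv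
  have hmono : Monotone ψ' := hψ' ▸ monotoneOn_univ.1
    (hconv.monotoneOn_deriv fun t _ => (hderiv t).differentiableAt)
  have hD := hasDerivAt_comp_softThreshold hderiv hodd.map_zero hε.le
  have hderivφ : deriv (ψ ∘ softThreshold ε) = ψ' ∘ softThreshold ε :=
    funext fun ξ => (hD ξ).deriv
  have hφconv : ConvexOn ℝ univ (ψ ∘ softThreshold ε) :=
    (hderivφ ▸ hmono.comp monotone_softThreshold).convexOn_univ_of_deriv
      fun ξ => (hD ξ).differentiableAt
  refine ⟨hφconv, fun ξ => (hD ξ).differentiableAt, ?_, fun ξ => ⟨fun h => ?_, fun h => ?_⟩,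
    fun γ hγ ξ q p hq hp => ⟨fun h => ?_, fun h => ?_⟩⟩
  · simpa [hderivφ] using hlip.comp lipschitzWith_softThreshold
  · simpa [softThreshold_eq_mul_sign hε.le h, hodd.map_mul_sign] using hD ξ
  · simpa [softThreshold_of_abs_le h, hodd.map_zero] using hD ξ
  · exact IsProxPoint.eq hp hφconv hγ.le (IsProxPoint.comp_softThreshold hq heven hε.le h)
  · refine IsProxPoint.eq hp hφconv hγ.le (isProxPoint_self hγ.le fun t => ?_)
    simpa [softThreshold_of_abs_le h] using heven.apply_zero_le hconv _

/-- Let `ε > 0`, `β > 0`, `ψ : ℝ → ℝ` even convex differentiable with a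
`β`-Lipschitzian derivative, and define the smoothed Vapnik loss
`φ ξ = ψ (max (|ξ| − ε) 0)`.  Then `φ` is convex and differentiable with a
`β`-Lipschitzian derivative; `φ'(ξ) = ψ'(|ξ| − ε)·sign ξ` if `|ξ| > ε`, `φ'(ξ) = 0` if
`|ξ| ≤ ε`; and for every `γ > 0` and `ξ`, `prox_{γφ} ξ = (ε + prox_{γψ}(|ξ| − ε))·sign ξ`
if `|ξ| > ε`, while `prox_{γφ} ξ = ξ` if `|ξ| ≤ ε`. -/
theorem stmt_7 (ε : ℝ) (hε : 0 < ε) (β : ℝ) (hβ : 0 < β)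
    (ψ : ℝ → ℝ) (heven : ∀ t, ψ (-t) = ψ t) (hconv : ConvexOn ℝ Set.univ ψ)
    (ψ' : ℝ → ℝ) (hderiv : ∀ t, HasDerivAt ψ (ψ' t) t)
    (hlip : LipschitzWith (Real.toNNReal β) ψ')
    (φ : ℝ → ℝ) (hdef : ∀ ξ, φ ξ = ψ (max (|ξ| - ε) 0)) :
    ConvexOn ℝ Set.univ φ ∧
    (∀ ξ, DifferentiableAt ℝ φ ξ) ∧
    LipschitzWith (Real.toNNReal β) (deriv φ) ∧
    (∀ ξ : ℝ,
      (ε < |ξ| → HasDerivAt φ (ψ' (|ξ| - ε) * Real.sign ξ) ξ) ∧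
      (|ξ| ≤ ε → HasDerivAt φ 0 ξ)) ∧
    (∀ γ : ℝ, 0 < γ → ∀ ξ q p : ℝ,
      -- `q = prox_{γψ}(|ξ| − ε)` :
      (∀ t : ℝ, γ * ψ q + ((|ξ| - ε) - q) ^ 2 / 2 ≤ γ * ψ t + ((|ξ| - ε) - t) ^ 2 / 2) →
      -- `p = prox_{γφ} ξ` :
      (∀ t : ℝ, γ * φ p + (ξ - p) ^ 2 / 2 ≤ γ * φ t + (ξ - t) ^ 2 / 2) →
      (ε < |ξ| → p = (ε + q) * Real.sign ξ) ∧ (|ξ| ≤ ε → p = ξ)) :=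
  stmt_7_general ε hε β ψ heven hconv ψ' hderiv hlip φ hdef
end

section
/- Let C be a nonempty closed convex subset of a real Hilbert space H, let ω > 0, and define h : H → ℝ by h = ω d_C − ln(1 + ω d_C). Then h is convex and Fréchet differentiable with an ω²-Lipschitzian gradient; for every x ∈ H, ∇h(x) = (ω²/(1 + ω d_C(x))) (x − proj_C x) if x ∉ C and ∇h(x) = 0 if x ∈ C; and for every γ > 0 and every x ∈ H, prox_{γh} x = proj_C x + ((γω² + 1 − ω d_C(x) − √(|ω d_C(x) − γω² − 1|² + 4 ω d_C(x)))/(2 ω d_C(x))) (proj_C x − x) if x ∉ C, while prox_{γh} x = x if x ∈ C. -/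
/-!
Write `φ(t) = ω t − ln(1 + ω t)`, so that `h = φ ∘ d_C`, and `G x = (ω² / (1 + ω d_C x)) (x − P x)`
with `P = proj_C`. Since `φ'(t) = ω² t / (1 + ω t)` and `φ` is convex on `[0, ∞)`, the variational
inequality `⟪x − P x, c − P x⟫ ≤ 0` makes `G x` a subgradient of `h` at every `x`; this alone gives
convexity. The field `G` is `ω²`-Lipschitz, being `ω²` times the 1-Lipschitz radial shrink
`a ↦ a / (1 + ω ‖a‖)` composed with the nonexpansive map `x ↦ x − P x`, and a continuous field of
subgradients is the gradient. For the prox at `x ∉ C`, the point `p = P x + λ (x − P x)`, where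
`λ > 0` solves `ω d_C(x) λ² + (γ ω² + 1 − ω d_C(x)) λ = 1`, still projects to `P x` and satisfies
`x − p = γ G p`; the subgradient inequality at `p` then makes it the unique minimizer.
-/

open Metric Filter Topology Asymptotics RealInnerProductSpace

section

variable {H : Type*} [NormedAddCommGroup H] [InnerProductSpace ℝ H]

def IsProx (f : H → ℝ) (x p : H) : Prop :=
  ∀ y, f p + ‖x - p‖ ^ 2 / 2 ≤ f y + ‖x - y‖ ^ 2 / 2

theorem convexOn_univ_of_forall_add_inner_le {f : H → ℝ} {g : H → H}
    (hg : ∀ z y, f z + ⟪g z, y - z⟫ ≤ f y) : ConvexOn ℝ Set.univ f := by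
  refine ⟨convex_univ, fun x _ y _ a b ha hb hab => ?_⟩
  obtain rfl : b = 1 - a := by linarith
  set z := a • x + (1 - a) • y
  have hcomb : a • (x - z) + (1 - a) • (y - z) = 0 := by simp only [z]; module
  have hin : a * ⟪g z, x - z⟫ + (1 - a) * ⟪g z, y - z⟫ = 0 := by
    rw [← real_inner_smul_right, ← real_inner_smul_right, ← inner_add_right, hcomb,
      inner_zero_right]
  have := add_le_add (mul_le_mul_of_nonneg_left (hg z x) ha)
    (mul_le_mul_of_nonneg_left (hg z y) hb)
  simp only [smul_eq_mul]
  linarith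

theorem hasGradientAt_of_forall_add_inner_le [CompleteSpace H] {f : H → ℝ} {g : H → H}
    (hg : ∀ z y, f z + ⟪g z, y - z⟫ ≤ f y) {x : H} (hgx : ContinuousAt g x) :
    HasGradientAt f (g x) x := by
  rw [hasGradientAt_iff_isLittleO]
  have hbound : ∀ y, ‖f y - f x - ⟪g x, y - x⟫‖ ≤ ‖‖g y - g x‖ * ‖y - x‖‖ := by
    intro y
    have hxy := hg x y
    have hyx := hg y x
    have hcs : ⟪g y - g x, y - x⟫ ≤ ‖g y - g x‖ * ‖y - x‖ := real_inner_le_norm _ _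
    rw [← neg_sub y x, inner_neg_right] at hyx
    rw [inner_sub_left] at hcs
    rw [Real.norm_of_nonneg (by linarith), Real.norm_of_nonneg (by positivity)]
    linarith
  have hsmall : (fun y => ‖g y - g x‖) =o[𝓝 x] (fun _ => (1 : ℝ)) :=
    (isLittleO_one_iff ℝ).2 (tendsto_iff_norm_sub_tendsto_zero.1 hgx)
  refine (isBigO_of_le _ hbound).trans_isLittleO ?_
  simpa using (hsmall.mul_isBigO (isBigO_refl (fun y => ‖y - x‖) _)).norm_right

theorem IsProx.eq_of_forall_add_inner_le {f : H → ℝ} {γ : ℝ} (hγ : 0 ≤ γ) {x p p₀ g : H}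
    (hp : IsProx (fun y => γ * f y) x p) (hg : ∀ y, f p₀ + ⟪g, y - p₀⟫ ≤ f y)
    (hx : γ • g = x - p₀) : p = p₀ := by
  have hsub : γ * f p₀ + ⟪x - p₀, p - p₀⟫ ≤ γ * f p := by
    rw [← hx, real_inner_smul_left, ← mul_add]
    exact mul_le_mul_of_nonneg_left (hg p) hγ
  have hexp : ‖x - p‖ ^ 2 = ‖x - p₀‖ ^ 2 - 2 * ⟪x - p₀, p - p₀⟫ + ‖p - p₀‖ ^ 2 := by
    rw [← norm_sub_sq_real, sub_sub_sub_cancel_right]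
  have : ‖p - p₀‖ ^ 2 ≤ 0 := by linarith [hp p₀]
  rw [← sub_eq_zero, ← norm_eq_zero]
  exact pow_eq_zero_iff two_ne_zero |>.1 (le_antisymm this (by positivity))

theorem infDist_eq_norm_sub_of_inner_le_zero {C : Set H} {z q : H} (hq : q ∈ C)
    (hz : ∀ c ∈ C, ⟪z - q, c - q⟫ ≤ 0) : infDist z C = ‖z - q‖ := by
  refine le_antisymm (by simpa [dist_eq_norm] using infDist_le_dist_of_mem hq)
    ((le_infDist ⟨q, hq⟩).2 fun c hc => ?_)
  have hexp : ‖z - c‖ ^ 2 = ‖z - q‖ ^ 2 - 2 * ⟪z - q, c - q⟫ + ‖c - q‖ ^ 2 := by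
    rw [← norm_sub_sq_real, sub_sub_sub_cancel_right]
  rw [dist_eq_norm]
  exact pow_le_pow_iff_left₀ (norm_nonneg _) (norm_nonneg _) two_ne_zero |>.1
    (by nlinarith [hz c hc, sq_nonneg ‖c - q‖])

theorem inner_sub_le_zero_of_forall_dist_le {C : Set H} (hC : Convex ℝ C) {z q : H}
    (hq : q ∈ C) (hz : ∀ c ∈ C, dist z q ≤ dist z c) : ∀ c ∈ C, ⟪z - q, c - q⟫ ≤ 0 := by
  refine (norm_eq_iInf_iff_real_inner_le_zero hC hq).1 (le_antisymm ?_ ?_)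
  · have : Nonempty C := ⟨⟨q, hq⟩⟩
    exact le_ciInf fun c => by simpa [dist_eq_norm] using hz c c.2
  · exact ciInf_le (f := fun c : C => ‖z - c‖)
      ⟨0, Set.forall_mem_range.2 fun c => norm_nonneg _⟩ ⟨q, hq⟩

theorem norm_sub_sub_sub_le_of_inner_le_zero {x y p q : H} (hx : ⟪x - p, q - p⟫ ≤ 0)
    (hy : ⟪y - q, p - q⟫ ≤ 0) : ‖(x - p) - (y - q)‖ ≤ ‖x - y‖ := by
  have hmono : 0 ≤ ⟪(x - p) - (y - q), p - q⟫ := by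
    rw [← neg_sub p q, inner_neg_right] at hx
    rw [inner_sub_left]
    linarith
  have hexp : ‖x - y‖ ^ 2
      = ‖(x - p) - (y - q)‖ ^ 2 + 2 * ⟪(x - p) - (y - q), p - q⟫ + ‖p - q‖ ^ 2 := by
    rw [← norm_add_sq_real]; congr 2; abel
  exact pow_le_pow_iff_left₀ (norm_nonneg _) (norm_nonneg _) two_ne_zero |>.1
    (by nlinarith [sq_nonneg ‖p - q‖])

theorem norm_inv_one_add_smul_sub_le {ω : ℝ} (hω : 0 ≤ ω) (a b : H) :
    ‖(1 + ω * ‖a‖)⁻¹ • a - (1 + ω * ‖b‖)⁻¹ • b‖ ≤ ‖a - b‖ := by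
  set s := ‖a‖
  set t := ‖b‖
  have hs : 0 ≤ ω * s := by positivity
  have ht : 0 ≤ ω * t := by positivity
  set α := (1 + ω * s)⁻¹
  set β := (1 + ω * t)⁻¹
  have hα : 0 < α := by positivity
  have hβ : 0 < β := by positivity
  have hαβ : α * β ≤ 1 := by
    rw [← mul_inv]
    exact inv_le_one_of_one_le₀ (by nlinarith)
  have hradial : (α * s - β * t) ^ 2 ≤ (s - t) ^ 2 := by
    have : α * s - β * t = α * β * (s - t) := by
      simp only [α, β]
      field_simp
      ring
    rw [this, mul_pow]
    exact mul_le_of_le_one_left (sq_nonneg _) (by nlinarith [mul_pos hα hβ])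
  have hcs : ⟪a, b⟫ ≤ s * t := real_inner_le_norm a b
  have hshrunk : ‖α • a - β • b‖ ^ 2 = (α * s - β * t) ^ 2 + 2 * (α * β) * (s * t - ⟪a, b⟫) := by
    rw [norm_sub_sq_real, real_inner_smul_left, real_inner_smul_right, norm_smul, norm_smul,
      Real.norm_of_nonneg hα.le, Real.norm_of_nonneg hβ.le]
    ring
  have horig : ‖a - b‖ ^ 2 = (s - t) ^ 2 + 2 * (s * t - ⟪a, b⟫) := by
    rw [norm_sub_sq_real]; ring
  exact pow_le_pow_iff_left₀ (norm_nonneg _) (norm_nonneg _) two_ne_zero |>.1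
    (by nlinarith [mul_le_mul_of_nonneg_right hαβ (sub_nonneg.2 hcs)])

theorem pos_and_quadratic_eq_one {D B l : ℝ} (hD : 0 < D)
    (hl : l = (Real.sqrt (B ^ 2 + 4 * D) - B) / (2 * D)) : 0 < l ∧ D * l ^ 2 + B * l = 1 := by
  have hS := Real.sq_sqrt (by positivity : 0 ≤ B ^ 2 + 4 * D)
  have hB : B < Real.sqrt (B ^ 2 + 4 * D) := by
    nlinarith [Real.sqrt_nonneg (B ^ 2 + 4 * D)]
  refine ⟨hl ▸ div_pos (by linarith) (by positivity), ?_⟩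
  rw [hl]
  generalize Real.sqrt (B ^ 2 + 4 * D) = S at hS
  field_simp
  linear_combination hS

noncomputable def logPenalty (ω t : ℝ) : ℝ := ω * t - Real.log (1 + ω * t)

theorem logPenalty_add_mul_sub_le {ω s t : ℝ} (hω : 0 ≤ ω) (hs : 0 ≤ s) (ht : 0 ≤ t) :
    logPenalty ω t + ω ^ 2 / (1 + ω * t) * t * (s - t) ≤ logPenalty ω s := by
  have hs' : 0 < 1 + ω * s := by positivity
  have ht' : 0 < 1 + ω * t := by positivity
  have hlog := Real.log_le_sub_one_of_pos (div_pos hs' ht')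
  rw [Real.log_div hs'.ne' ht'.ne'] at hlog
  have hid : ω * (s - t)
      = ((1 + ω * s) / (1 + ω * t) - 1) + ω ^ 2 / (1 + ω * t) * t * (s - t) := by
    field_simp; ring
  unfold logPenalty
  linarith

theorem logPenalty_norm_add_inner_le {ω : ℝ} (hω : 0 ≤ ω) {z q y p : H}
    (hp : ⟪z - q, p - q⟫ ≤ 0) :
    logPenalty ω ‖z - q‖ + ⟪(ω ^ 2 / (1 + ω * ‖z - q‖)) • (z - q), y - z⟫
      ≤ logPenalty ω ‖y - p‖ := by
  have hinner : ⟪z - q, y - z⟫ ≤ ‖z - q‖ * (‖y - p‖ - ‖z - q‖) := by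
    have hsplit : ⟪z - q, y - z⟫ = ⟪z - q, y - p⟫ + ⟪z - q, p - q⟫ - ⟪z - q, z - q⟫ := by
      rw [← inner_add_right, ← inner_sub_right]; congr 1; abel
    rw [hsplit, real_inner_self_eq_norm_sq]
    nlinarith [real_inner_le_norm (z - q) (y - p)]
  rw [real_inner_smul_left]
  have := mul_le_mul_of_nonneg_left hinner (by positivity : 0 ≤ ω ^ 2 / (1 + ω * ‖z - q‖))
  linarith [logPenalty_add_mul_sub_le (s := ‖y - p‖) hω (norm_nonneg _) (norm_nonneg (z - q))]

section
variable {C : Set H} {projC : H → H} {ω : ℝ}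

theorem logPenalty_infDist_add_inner_le (hω : 0 ≤ ω)
    (hvar : ∀ x, projC x ∈ C ∧ ∀ c ∈ C, ⟪x - projC x, c - projC x⟫ ≤ 0)
    {z q : H} (hq : q ∈ C) (hz : ∀ c ∈ C, ⟪z - q, c - q⟫ ≤ 0) (y : H) :
    logPenalty ω (infDist z C) + ⟪(ω ^ 2 / (1 + ω * ‖z - q‖)) • (z - q), y - z⟫
      ≤ logPenalty ω (infDist y C) := by
  rw [infDist_eq_norm_sub_of_inner_le_zero hq hz,
    infDist_eq_norm_sub_of_inner_le_zero (hvar y).1 (hvar y).2]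
  exact logPenalty_norm_add_inner_le hω (hz _ (hvar y).1)

theorem lipschitzWith_smul_sub_proj (hω : 0 ≤ ω)
    (hvar : ∀ x, projC x ∈ C ∧ ∀ c ∈ C, ⟪x - projC x, c - projC x⟫ ≤ 0) :
    LipschitzWith (ω ^ 2).toNNReal
      (fun x => (ω ^ 2 / (1 + ω * ‖x - projC x‖)) • (x - projC x)) := by
  refine LipschitzWith.of_dist_le_mul fun x y => ?_
  have hshrink := norm_inv_one_add_smul_sub_le hω (x - projC x) (y - projC y)
  have hnonexp := norm_sub_sub_sub_le_of_inner_le_zero ((hvar x).2 _ (hvar y).1)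
    ((hvar y).2 _ (hvar x).1)
  simp only [dist_eq_norm, Real.coe_toNNReal _ (sq_nonneg ω), div_eq_mul_inv, mul_smul,
    ← smul_sub, norm_smul, Real.norm_of_nonneg (sq_nonneg ω)]
  gcongr
  exact hshrink.trans hnonexp

theorem IsProx.eq_add_smul_sub_of_quadratic (hω : 0 ≤ ω) {γ : ℝ} (hγ : 0 ≤ γ)
    (hvar : ∀ x, projC x ∈ C ∧ ∀ c ∈ C, ⟪x - projC x, c - projC x⟫ ≤ 0) {x q p : H}
    (hp : IsProx (fun y => γ * logPenalty ω (infDist y C)) x p)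
    (hq : q ∈ C) (hx : ∀ c ∈ C, ⟪x - q, c - q⟫ ≤ 0) {l : ℝ} (hl : 0 ≤ l)
    (hquad : ω * ‖x - q‖ * l ^ 2 + (γ * ω ^ 2 + 1 - ω * ‖x - q‖) * l = 1) :
    p = q + l • (x - q) := by
  have hp₀q : q + l • (x - q) - q = l • (x - q) := add_sub_cancel_left _ _
  have hvar₀ : ∀ c ∈ C, ⟪q + l • (x - q) - q, c - q⟫ ≤ 0 := fun c hc => by
    rw [hp₀q, real_inner_smul_left]
    exact mul_nonpos_of_nonneg_of_nonpos hl (hx c hc)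
  refine hp.eq_of_forall_add_inner_le hγ (logPenalty_infDist_add_inner_le hω hvar hq hvar₀) ?_
  have hcoef : γ * (ω ^ 2 / (1 + ω * (l * ‖x - q‖))) * l = 1 - l := by
    field_simp
    linear_combination hquad
  rw [hp₀q, norm_smul, Real.norm_of_nonneg hl, smul_smul, smul_smul, hcoef]
  module

theorem IsProx.eq_of_not_mem (hω : 0 < ω) {γ : ℝ} (hγ : 0 < γ)
    (hvar : ∀ x, projC x ∈ C ∧ ∀ c ∈ C, ⟪x - projC x, c - projC x⟫ ≤ 0) {x p : H}
    (hp : IsProx (fun y => γ * logPenalty ω (infDist y C)) x p) (hx : x ∉ C) :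
    p = projC x + ((γ * ω ^ 2 + 1 - ω * infDist x C -
            Real.sqrt (|ω * infDist x C - γ * ω ^ 2 - 1| ^ 2 + 4 * (ω * infDist x C)))
          / (2 * (ω * infDist x C))) • (projC x - x) := by
  obtain ⟨hq, hxq⟩ := hvar x
  have hd : infDist x C = ‖x - projC x‖ := infDist_eq_norm_sub_of_inner_le_zero hq hxq
  have hd₀ : 0 < ω * ‖x - projC x‖ :=
    mul_pos hω (norm_pos_iff.2 (sub_ne_zero.2 fun h => hx (h ▸ hq)))
  have hB : |ω * ‖x - projC x‖ - γ * ω ^ 2 - 1| ^ 2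
      = (γ * ω ^ 2 + 1 - ω * ‖x - projC x‖) ^ 2 := by
    rw [sq_abs]; ring
  rw [hd, hB, ← neg_sub x, smul_neg, ← neg_smul, ← neg_div, neg_sub]
  obtain ⟨hl, hquad⟩ := pos_and_quadratic_eq_one hd₀ rfl
  exact hp.eq_add_smul_sub_of_quadratic hω.le hγ.le hvar hq hxq hl.le hquad

end

end

theorem stmt_10_general {H : Type*} [NormedAddCommGroup H] [InnerProductSpace ℝ H] [CompleteSpace H]
    (C : Set H) (hCconv : Convex ℝ C)
    (ω : ℝ) (hω : 0 < ω)
    (h : H → ℝ)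
    (hdef : ∀ x, h x = ω * Metric.infDist x C - Real.log (1 + ω * Metric.infDist x C))
    (projC : H → H)
    (hproj : ∀ x, projC x ∈ C ∧ ∀ y ∈ C, dist x (projC x) ≤ dist x y) :
    ConvexOn ℝ Set.univ h ∧
    (∀ x, DifferentiableAt ℝ h x) ∧
    LipschitzWith (Real.toNNReal (ω ^ 2)) (fun x => gradient h x) ∧
    (∀ x : H,
      (x ∉ C → HasGradientAt h
        ((ω ^ 2 / (1 + ω * Metric.infDist x C)) • (x - projC x)) x) ∧
      (x ∈ C → HasGradientAt h 0 x)) ∧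
    (∀ γ : ℝ, 0 < γ → ∀ x p : H,
      -- `p = prox_{γh} x` :
      (∀ y : H, γ * h p + ‖x - p‖ ^ 2 / 2 ≤ γ * h y + ‖x - y‖ ^ 2 / 2) →
      (x ∉ C → p = projC x +
        ((γ * ω ^ 2 + 1 - ω * Metric.infDist x C -
            Real.sqrt (|ω * Metric.infDist x C - γ * ω ^ 2 - 1| ^ 2
              + 4 * (ω * Metric.infDist x C)))
          / (2 * (ω * Metric.infDist x C))) • (projC x - x)) ∧
      (x ∈ C → p = x)) := by
  have hh : ∀ x, h x = logPenalty ω (infDist x C) := hdef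
  have hvar : ∀ x, projC x ∈ C ∧ ∀ c ∈ C, ⟪x - projC x, c - projC x⟫ ≤ 0 := fun x =>
    ⟨(hproj x).1, inner_sub_le_zero_of_forall_dist_le hCconv (hproj x).1 (hproj x).2⟩
  have hfix : ∀ x ∈ C, projC x = x := fun x hx =>
    (dist_le_zero.1 (by simpa using (hproj x).2 x hx)).symm
  set G := fun x => (ω ^ 2 / (1 + ω * ‖x - projC x‖)) • (x - projC x)
  have hsub : ∀ z y, h z + ⟪G z, y - z⟫ ≤ h y := fun z y => by
    simpa only [hh] using logPenalty_infDist_add_inner_le hω.le hvar (hvar z).1 (hvar z).2 y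
  have hlip : LipschitzWith (ω ^ 2).toNNReal G := lipschitzWith_smul_sub_proj hω.le hvar
  have hgrad : ∀ x, HasGradientAt h (G x) x := fun x =>
    hasGradientAt_of_forall_add_inner_le hsub hlip.continuous.continuousAt
  refine ⟨convexOn_univ_of_forall_add_inner_le hsub, fun x => (hgrad x).differentiableAt, ?_,
    fun x => ⟨fun _ => ?_, fun hx => ?_⟩, fun γ hγ x p hp => ⟨fun hx => ?_, fun hx => ?_⟩⟩
  · rwa [show gradient h = G from funext fun x => (hgrad x).gradient]
  · rw [infDist_eq_norm_sub_of_inner_le_zero (hvar x).1 (hvar x).2]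
    exact hgrad x
  · simpa [G, hfix x hx] using hgrad x
  · simp only [hh] at hp
    exact IsProx.eq_of_not_mem hω hγ hvar hp hx
  · refine IsProx.eq_of_forall_add_inner_le hγ.le hp (hsub x) ?_
    simp [G, hfix x hx]

/-- Let `C` be nonempty closed convex in a real Hilbert space, `ω > 0`,
and `h = ω d_C − ln(1 + ω d_C)`.  Then `h` is convex and Fréchet differentiable with an
`ω²`-Lipschitzian gradient; `∇h(x) = (ω²/(1 + ω d_C x)) • (x − proj_C x)` if `x ∉ C` and
`∇h(x) = 0` if `x ∈ C`; and for every `γ > 0` and `x`,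
`prox_{γh} x = proj_C x + ((γω² + 1 − ω d_C x − √(|ω d_C x − γω² − 1|² + 4 ω d_C x))/(2 ω d_C x)) • (proj_C x − x)`
if `x ∉ C`, while `prox_{γh} x = x` if `x ∈ C`. -/
theorem stmt_10 {H : Type*} [NormedAddCommGroup H] [InnerProductSpace ℝ H] [CompleteSpace H]
    (C : Set H) (hCne : C.Nonempty) (hCclosed : IsClosed C) (hCconv : Convex ℝ C)
    (ω : ℝ) (hω : 0 < ω)
    (h : H → ℝ)
    (hdef : ∀ x, h x = ω * Metric.infDist x C - Real.log (1 + ω * Metric.infDist x C))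
    (projC : H → H)
    (hproj : ∀ x, projC x ∈ C ∧ ∀ y ∈ C, dist x (projC x) ≤ dist x y) :
    ConvexOn ℝ Set.univ h ∧
    (∀ x, DifferentiableAt ℝ h x) ∧
    LipschitzWith (Real.toNNReal (ω ^ 2)) (fun x => gradient h x) ∧
    (∀ x : H,
      (x ∉ C → HasGradientAt h
        ((ω ^ 2 / (1 + ω * Metric.infDist x C)) • (x - projC x)) x) ∧
      (x ∈ C → HasGradientAt h 0 x)) ∧
    (∀ γ : ℝ, 0 < γ → ∀ x p : H,
      -- `p = prox_{γh} x` :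
      (∀ y : H, γ * h p + ‖x - p‖ ^ 2 / 2 ≤ γ * h y + ‖x - y‖ ^ 2 / 2) →
      (x ∉ C → p = projC x +
        ((γ * ω ^ 2 + 1 - ω * Metric.infDist x C -
            Real.sqrt (|ω * Metric.infDist x C - γ * ω ^ 2 - 1| ^ 2
              + 4 * (ω * Metric.infDist x C)))
          / (2 * (ω * Metric.infDist x C))) • (projC x - x)) ∧
      (x ∈ C → p = x)) :=
  stmt_10_general C hCconv ω hω h hdef projC hproj
end

section
/- Let H and G be real Hilbert spaces, let M : H → G be a bounded linear operator such that M M* = θ Id for some θ > 0, let D be a nonempty closed convex subset of G, let μ > 0, let φ : ℝ → ℝ be even, convex, and differentiable with a μ-Lipschitzian derivative, and set h = φ ∘ d_D ∘ M. Let γ > 0 and x ∈ H. Then prox_{γh} x = x + (θ⁻¹ (d_D(Mx) − prox_{γθφ} d_D(Mx))/d_D(Mx)) M*( proj_D(Mx) − Mx ) if Mx ∉ D, and prox_{γh} x = x if Mx ∈ D. -/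
/-!
The objective `y ↦ γ h y + ‖x - y‖² / 2` is strongly convex, because `h` is convex (`d_D` is
convex, and `φ`, being even and convex, is nondecreasing on `[0, ∞)`); so it has at most one
minimizer, and it suffices to exhibit one. If `M x ∈ D`, then `x` is a minimizer since `φ` is
minimal at `0`. Otherwise let `r = d_D(M x) > 0`. As `M M* = θ Id` gives `‖M‖² ≤ θ` and `d_D` is
1-Lipschitz, `(r - d_D(M y))² ≤ θ ‖x - y‖²`, so by the minimality of `q` the objective is at least
`γ φ(q) + (r - q)² / (2θ)`. The proposed point is sent by `M` to the point of the segment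
`[M x, proj_D(M x)]` at distance `q` from `D`, and its squared distance to `x` is `(r - q)² / θ`:
it attains the bound.
-/

open Set Metric ContinuousLinearMap

theorem ConvexOn.monotoneOn_Ici_of_even_s12 {φ : ℝ → ℝ} (hconv : ConvexOn ℝ univ φ)
    (heven : ∀ t, φ (-t) = φ t) : MonotoneOn φ (Ici 0) := by
  intro s hs t _ hst
  have hseg : s ∈ segment ℝ (-t) t := by
    rw [segment_eq_Icc (by linarith [mem_Ici.1 hs])]
    exact ⟨by linarith [mem_Ici.1 hs], hst⟩
  simpa [heven] using hconv.le_on_segment (mem_univ _) (mem_univ _) hseg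

theorem Convex.convexOn_infDist {E : Type*} [SeminormedAddCommGroup E] [NormedSpace ℝ E]
    {D : Set E} (hD : Convex ℝ D) : ConvexOn ℝ univ (infDist · D) := by
  rcases D.eq_empty_or_nonempty with rfl | hne
  · simpa using convexOn_const (0 : ℝ) convex_univ
  refine ⟨convex_univ, fun y _ z _ a b ha hb hab => ?_⟩
  simp only [smul_eq_mul]
  refine le_of_forall_pos_le_add fun ε hε => ?_
  obtain ⟨u, hu, hyu⟩ := (infDist_lt_iff hne).1 (lt_add_of_pos_right (infDist y D) hε)
  obtain ⟨v, hv, hzv⟩ := (infDist_lt_iff hne).1 (lt_add_of_pos_right (infDist z D) hε)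
  calc infDist (a • y + b • z) D ≤ dist (a • y + b • z) (a • u + b • v) :=
        infDist_le_dist_of_mem (hD hu hv ha hb hab)
    _ ≤ a * dist y u + b * dist z v := by
        refine (dist_add_add_le _ _ _ _).trans_eq ?_
        rw [dist_smul₀, dist_smul₀, Real.norm_of_nonneg ha, Real.norm_of_nonneg hb]
    _ ≤ a * (infDist y D + ε) + b * (infDist z D + ε) := by gcongr
    _ = a * infDist y D + b * infDist z D + ε := by linear_combination ε * hab

theorem ConvexOn.comp_of_monotoneOn_Ici {E : Type*} [AddCommGroup E] [Module ℝ E]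
    {g : ℝ → ℝ} (hg : ConvexOn ℝ univ g) (hg' : MonotoneOn g (Ici 0)) {f : E → ℝ}
    (hf : ConvexOn ℝ univ f) (hf₀ : ∀ y, 0 ≤ f y) : ConvexOn ℝ univ (g ∘ f) := by
  refine ⟨convex_univ, fun y _ z _ a b ha hb hab => ?_⟩
  have hcomb : 0 ≤ a • f y + b • f z := by simp only [smul_eq_mul]; positivity [hf₀ y, hf₀ z]
  exact (hg' (hf₀ _) hcomb (hf.2 (mem_univ y) (mem_univ z) ha hb hab)).trans
    (hg.2 (mem_univ _) (mem_univ _) ha hb hab)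

theorem Metric.infDist_eq_dist_of_forall_dist_le_s12 {E : Type*} [PseudoMetricSpace E] {D : Set E}
    {y P : E} (hP : P ∈ D) (hmin : ∀ z ∈ D, dist y P ≤ dist y z) : infDist y D = dist y P :=
  le_antisymm (infDist_le_dist_of_mem hP) ((le_infDist ⟨P, hP⟩).2 hmin)

theorem Metric.infDist_lineMap_of_dist_eq {E : Type*} [NormedAddCommGroup E] [NormedSpace ℝ E]
    {D : Set E} {y P : E} (hP : P ∈ D) (hyP : infDist y D = dist y P) {t : ℝ} (ht₀ : 0 ≤ t)
    (ht₁ : t ≤ 1) : infDist (AffineMap.lineMap y P t) D = (1 - t) * infDist y D := by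
  have hright : dist (AffineMap.lineMap y P t) P = (1 - t) * infDist y D := by
    rw [dist_lineMap_right, hyP, Real.norm_of_nonneg (by linarith)]
  have hleft : dist (AffineMap.lineMap y P t) y = t * infDist y D := by
    rw [dist_lineMap_left, hyP, Real.norm_of_nonneg ht₀]
  have hle := infDist_le_infDist_add_dist (s := D) (x := y) (y := AffineMap.lineMap y P t)
  rw [dist_comm, hleft] at hle
  exact le_antisymm (hright ▸ infDist_le_dist_of_mem hP) (by linarith)

theorem eq_of_forall_add_norm_sub_sq_le {H : Type*} [NormedAddCommGroup H]
    [InnerProductSpace ℝ H] {f : H → ℝ} (hf : ConvexOn ℝ univ f) {x p p' : H}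
    (hp : ∀ y, f p + ‖x - p‖ ^ 2 / 2 ≤ f y + ‖x - y‖ ^ 2 / 2)
    (hp' : ∀ y, f p' + ‖x - p'‖ ^ 2 / 2 ≤ f y + ‖x - y‖ ^ 2 / 2) : p = p' := by
  have hstrong : StrongConvexOn univ 1 fun y => f y + ‖x - y‖ ^ 2 / 2 := by
    rw [strongConvexOn_iff_convex]
    have hlin : ConvexOn ℝ univ fun y => -inner ℝ x y + ‖x‖ ^ 2 / 2 :=
      ((-innerSL ℝ x).toLinearMap.convexOn convex_univ).add_const _
    have hfun : (fun y => f y + ‖x - y‖ ^ 2 / 2 - 1 / 2 * ‖y‖ ^ 2)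
        = fun y => f y + (-inner ℝ x y + ‖x‖ ^ 2 / 2) := by
      funext y
      rw [norm_sub_sq_real]
      ring
    exact hfun ▸ hf.add hlin
  exact (hstrong.strictConvexOn one_pos).eq_of_isMinOn (fun y _ => hp y) (fun y _ => hp' y)
    (mem_univ _) (mem_univ _)

namespace ContinuousLinearMap

variable {H G : Type*} [NormedAddCommGroup H] [InnerProductSpace ℝ H] [CompleteSpace H]
  [NormedAddCommGroup G] [InnerProductSpace ℝ G] [CompleteSpace G] {M : H →L[ℝ] G} {θ : ℝ}

theorem apply_adjoint_apply_of_comp_adjoint_eq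
    (hM : M.comp (adjoint M) = θ • ContinuousLinearMap.id ℝ G) (w : G) :
    M (adjoint M w) = θ • w := by
  simpa using congr($hM w)

theorem norm_adjoint_apply_sq_of_comp_adjoint_eq
    (hM : M.comp (adjoint M) = θ • ContinuousLinearMap.id ℝ G) (w : G) :
    ‖adjoint M w‖ ^ 2 = θ * ‖w‖ ^ 2 := by
  rw [← real_inner_self_eq_norm_sq, adjoint_inner_left, apply_adjoint_apply_of_comp_adjoint_eq hM,
    real_inner_smul_right, real_inner_self_eq_norm_sq]

theorem norm_apply_sq_le_of_comp_adjoint_eq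
    (hM : M.comp (adjoint M) = θ • ContinuousLinearMap.id ℝ G) (hθ : 0 ≤ θ) (z : H) :
    ‖M z‖ ^ 2 ≤ θ * ‖z‖ ^ 2 := by
  have hnorm : ‖M‖ ^ 2 ≤ θ :=
    calc ‖M‖ ^ 2 = ‖adjoint M‖ * ‖adjoint M‖ := by rw [LinearIsometryEquiv.norm_map, sq]
      _ = ‖M.comp (adjoint M)‖ := by rw [← norm_adjoint_comp_self, adjoint_adjoint]
      _ ≤ ‖θ‖ * ‖ContinuousLinearMap.id ℝ G‖ := by
        rw [hM]
        exact norm_smul_le θ (ContinuousLinearMap.id ℝ G)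
      _ ≤ θ := by
        rw [Real.norm_of_nonneg hθ]
        exact mul_le_of_le_one_right hθ norm_id_le
  calc ‖M z‖ ^ 2 ≤ (‖M‖ * ‖z‖) ^ 2 := by gcongr; exact le_opNorm M z
    _ = ‖M‖ ^ 2 * ‖z‖ ^ 2 := mul_pow ..
    _ ≤ θ * ‖z‖ ^ 2 := by gcongr

end ContinuousLinearMap

theorem mem_Icc_of_forall_prox_le {φ : ℝ → ℝ} (hφ : MonotoneOn φ (Ici 0))
    (heven : ∀ t, φ (-t) = φ t) {κ r q : ℝ} (hκ : 0 ≤ κ) (hr : 0 < r)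
    (hq : ∀ t, κ * φ q + (r - q) ^ 2 / 2 ≤ κ * φ t + (r - t) ^ 2 / 2) : q ∈ Icc 0 r := by
  have hq₀ : 0 ≤ q := by
    have := hq (-q)
    rw [heven] at this
    nlinarith
  refine ⟨hq₀, le_of_not_gt fun hrq => ?_⟩
  have hφ_le : φ r ≤ φ q := hφ (mem_Ici.2 hr.le) (mem_Ici.2 hq₀) hrq.le
  nlinarith [hq r, mul_le_mul_of_nonneg_left hφ_le hκ]

theorem prox_comp_infDist_lower_bound {H G : Type*} [NormedAddCommGroup H]
    [InnerProductSpace ℝ H] [NormedAddCommGroup G] [InnerProductSpace ℝ G] {M : H →L[ℝ] G}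
    {θ γ q : ℝ} {D : Set G} {φ : ℝ → ℝ} {x : H} (hMθ : ∀ z, ‖M z‖ ^ 2 ≤ θ * ‖z‖ ^ 2) (hθ : 0 < θ)
    (hq : ∀ t : ℝ, (γ * θ) * φ q + (infDist (M x) D - q) ^ 2 / 2
      ≤ (γ * θ) * φ t + (infDist (M x) D - t) ^ 2 / 2) (y : H) :
    γ * φ q + (infDist (M x) D - q) ^ 2 / θ / 2
      ≤ γ * φ (infDist (M y) D) + ‖x - y‖ ^ 2 / 2 := by
  set r := infDist (M x) D
  set s := infDist (M y) D
  have hrs : (r - s) ^ 2 ≤ θ * ‖x - y‖ ^ 2 :=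
    calc (r - s) ^ 2 ≤ dist (M x) (M y) ^ 2 := by
          rw [← sq_abs]
          gcongr
          exact abs_sub_le_iff.2
            ⟨by linarith [infDist_le_infDist_add_dist (s := D) (x := M x) (y := M y)],
              by linarith [infDist_le_infDist_add_dist (s := D) (x := M y) (y := M x),
                dist_comm (M x) (M y)]⟩
      _ ≤ θ * ‖x - y‖ ^ 2 := by rw [dist_eq_norm, ← map_sub]; exact hMθ _
  refine le_of_mul_le_mul_left ?_ hθ
  calc θ * (γ * φ q + (r - q) ^ 2 / θ / 2) = γ * θ * φ q + (r - q) ^ 2 / 2 := by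
        field_simp
    _ ≤ γ * θ * φ s + (r - s) ^ 2 / 2 := hq s
    _ ≤ θ * (γ * φ s + ‖x - y‖ ^ 2 / 2) := by linarith

theorem forall_prox_comp_infDist_le_of_notMem {H G : Type*} [NormedAddCommGroup H]
    [InnerProductSpace ℝ H] [CompleteSpace H] [NormedAddCommGroup G] [InnerProductSpace ℝ G]
    [CompleteSpace G] {M : H →L[ℝ] G} {θ γ q : ℝ} {D : Set G} {φ : ℝ → ℝ} {x : H} {P : G}
    (hM : M.comp (adjoint M) = θ • ContinuousLinearMap.id ℝ G) (hθ : 0 < θ) (hγ : 0 ≤ γ)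
    (hDclosed : IsClosed D) (hφ : MonotoneOn φ (Ici 0)) (heven : ∀ t, φ (-t) = φ t)
    (hq : ∀ t : ℝ, (γ * θ) * φ q + (infDist (M x) D - q) ^ 2 / 2
      ≤ (γ * θ) * φ t + (infDist (M x) D - t) ^ 2 / 2)
    (hP : P ∈ D) (hPx : infDist (M x) D = dist (M x) P) (hx : M x ∉ D) (y : H) :
    γ * φ (infDist (M (x + (θ⁻¹ * (infDist (M x) D - q) / infDist (M x) D) •
        adjoint M (P - M x))) D) +
      ‖x - (x + (θ⁻¹ * (infDist (M x) D - q) / infDist (M x) D) • adjoint M (P - M x))‖ ^ 2 / 2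
      ≤ γ * φ (infDist (M y) D) + ‖x - y‖ ^ 2 / 2 := by
  set r := infDist (M x) D
  have hr : 0 < r := (hDclosed.notMem_iff_infDist_pos ⟨P, hP⟩).1 hx
  obtain ⟨hq₀, hqr⟩ := mem_Icc_of_forall_prox_le hφ heven (by positivity) hr hq
  have hPr : ‖P - M x‖ = r := by rw [hPx, dist_comm, dist_eq_norm]
  have hMp : M (x + (θ⁻¹ * (r - q) / r) • adjoint M (P - M x))
      = AffineMap.lineMap (M x) P ((r - q) / r) := by
    rw [AffineMap.lineMap_apply_module', map_add, map_smul,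
      apply_adjoint_apply_of_comp_adjoint_eq hM, smul_smul, add_comm]
    congr 2
    field_simp
  have hdist : infDist (M (x + (θ⁻¹ * (r - q) / r) • adjoint M (P - M x))) D = q := by
    rw [hMp, infDist_lineMap_of_dist_eq hP hPx (by positivity)
      ((div_le_one hr).2 (by linarith))]
    field_simp
    ring
  have hnorm : ‖x - (x + (θ⁻¹ * (r - q) / r) • adjoint M (P - M x))‖ ^ 2 = (r - q) ^ 2 / θ := by
    rw [sub_add_cancel_left, norm_neg, norm_smul, mul_pow, Real.norm_eq_abs, sq_abs,
      norm_adjoint_apply_sq_of_comp_adjoint_eq hM, hPr]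
    field_simp
  rw [hdist, hnorm]
  exact prox_comp_infDist_lower_bound (norm_apply_sq_le_of_comp_adjoint_eq hM hθ.le) hθ hq y

theorem stmt_12_general {H : Type*} [NormedAddCommGroup H] [InnerProductSpace ℝ H] [CompleteSpace H]
    {G : Type*} [NormedAddCommGroup G] [InnerProductSpace ℝ G] [CompleteSpace G]
    (M : H →L[ℝ] G) (θ : ℝ) (hθ : 0 < θ)
    (hM : M.comp (ContinuousLinearMap.adjoint M) = θ • ContinuousLinearMap.id ℝ G)
    (D : Set G) (hDclosed : IsClosed D) (hDconv : Convex ℝ D)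
    (φ : ℝ → ℝ) (heven : ∀ t, φ (-t) = φ t) (hconv : ConvexOn ℝ Set.univ φ)
    (h : H → ℝ) (hdef : ∀ x, h x = φ (Metric.infDist (M x) D))
    (projD : G → G)
    (hproj : ∀ y, projD y ∈ D ∧ ∀ z ∈ D, dist y (projD y) ≤ dist y z)
    (γ : ℝ) (hγ : 0 < γ) (x : H)
    -- `q = prox_{γθφ}(d_D(Mx))` :
    (q : ℝ)
    (hq : ∀ t : ℝ, (γ * θ) * φ q + (Metric.infDist (M x) D - q) ^ 2 / 2
      ≤ (γ * θ) * φ t + (Metric.infDist (M x) D - t) ^ 2 / 2)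
    -- `p = prox_{γh} x` :
    (p : H)
    (hp : ∀ y : H, γ * h p + ‖x - p‖ ^ 2 / 2 ≤ γ * h y + ‖x - y‖ ^ 2 / 2) :
    (M x ∉ D → p = x + (θ⁻¹ * (Metric.infDist (M x) D - q) / Metric.infDist (M x) D) •
      ContinuousLinearMap.adjoint M (projD (M x) - M x)) ∧
    (M x ∈ D → p = x) := by
  have hφ : MonotoneOn φ (Ici 0) := hconv.monotoneOn_Ici_of_even_s12 heven
  have hconvex : ConvexOn ℝ univ fun y => γ * φ (infDist (M y) D) :=
    (hconv.comp_of_monotoneOn_Ici hφ (hDconv.convexOn_infDist.comp_linearMap M.toLinearMap)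
      fun _ => infDist_nonneg).smul hγ.le
  simp only [hdef] at hp
  refine ⟨fun hx => eq_of_forall_add_norm_sub_sq_le hconvex hp fun y => ?_, fun hx =>
    eq_of_forall_add_norm_sub_sq_le hconvex hp fun y => ?_⟩
  · exact forall_prox_comp_infDist_le_of_notMem hM hθ hγ.le hDclosed hφ heven hq (hproj _).1
      (infDist_eq_dist_of_forall_dist_le_s12 (hproj _).1 (hproj _).2) hx y
  · rw [infDist_zero_of_mem hx, sub_self, norm_zero]
    have hφ₀ : φ 0 ≤ φ (infDist (M y) D) := hφ self_mem_Ici infDist_nonneg infDist_nonneg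
    nlinarith [sq_nonneg ‖x - y‖]

/-- In the setting of Statement 11 (`M M* = θ Id`, `h = φ ∘ d_D ∘ M`),
for `γ > 0` and `x ∈ H`:
`prox_{γh} x = x + (θ⁻¹ (d_D(Mx) − prox_{γθφ}(d_D(Mx)))/d_D(Mx)) • M*(proj_D(Mx) − Mx)`
if `Mx ∉ D`, and `prox_{γh} x = x` if `Mx ∈ D`. -/
theorem stmt_12 {H : Type*} [NormedAddCommGroup H] [InnerProductSpace ℝ H] [CompleteSpace H]
    {G : Type*} [NormedAddCommGroup G] [InnerProductSpace ℝ G] [CompleteSpace G]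
    (M : H →L[ℝ] G) (θ : ℝ) (hθ : 0 < θ)
    (hM : M.comp (ContinuousLinearMap.adjoint M) = θ • ContinuousLinearMap.id ℝ G)
    (D : Set G) (hDne : D.Nonempty) (hDclosed : IsClosed D) (hDconv : Convex ℝ D)
    (μ : ℝ) (hμ : 0 < μ)
    (φ : ℝ → ℝ) (heven : ∀ t, φ (-t) = φ t) (hconv : ConvexOn ℝ Set.univ φ)
    (φ' : ℝ → ℝ) (hderiv : ∀ t, HasDerivAt φ (φ' t) t)
    (hlip : LipschitzWith (Real.toNNReal μ) φ')
    (h : H → ℝ) (hdef : ∀ x, h x = φ (Metric.infDist (M x) D))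
    (projD : G → G)
    (hproj : ∀ y, projD y ∈ D ∧ ∀ z ∈ D, dist y (projD y) ≤ dist y z)
    (γ : ℝ) (hγ : 0 < γ) (x : H)
    -- `q = prox_{γθφ}(d_D(Mx))` :
    (q : ℝ)
    (hq : ∀ t : ℝ, (γ * θ) * φ q + (Metric.infDist (M x) D - q) ^ 2 / 2
      ≤ (γ * θ) * φ t + (Metric.infDist (M x) D - t) ^ 2 / 2)
    -- `p = prox_{γh} x` :
    (p : H)
    (hp : ∀ y : H, γ * h p + ‖x - p‖ ^ 2 / 2 ≤ γ * h y + ‖x - y‖ ^ 2 / 2) :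
    (M x ∉ D → p = x + (θ⁻¹ * (Metric.infDist (M x) D - q) / Metric.infDist (M x) D) •
      ContinuousLinearMap.adjoint M (projD (M x) - M x)) ∧
    (M x ∈ D → p = x) :=
  stmt_12_general M θ hθ hM D hDclosed hDconv φ heven hconv h hdef projD hproj γ hγ x q hq p hp
end
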